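/- arXiv:2403.17121 — 6 statements merged into one kernel-verified Lean document; each statement's English description precedes it below -/
import Mathlib

section
/- Let n ≥ 1, let α, α* ∈ ℝ^n, let Z ∈ ℝ^{n×d} and Z* ∈ ℝ^{n×d'} both be centered (1_nᵀ Z = 0 and 1_nᵀ Z* = 0). If α 1_nᵀ + 1_n αᵀ + Z Zᵀ = α* 1_nᵀ + 1_n α*ᵀ + Z* Z*ᵀ, then α = α* and Z Zᵀ = Z* Z*ᵀ. -/
open Matrix

/-- The all-ones column vector in `ℝ^n`, as an `n × 1` matrix. -/
def onesCol (n : ℕ) : Matrix (Fin n) (Fin 1) ℝ := Matrix.of fun _ _ => (1 : ℝ)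

lemma gram_row_sum_zero {n d : ℕ} (Z : Matrix (Fin n) (Fin d) ℝ)
    (hZ : (onesCol n)ᵀ * Z = 0) (i : Fin n) :
    ∑ j, (Z * Zᵀ) i j = 0 := by
  have hcol : ∀ k, ∑ j, Z j k = 0 := by
    intro k
    have := congrFun (congrFun hZ 0) k
    simpa [Matrix.mul_apply, onesCol] using this
  calc ∑ j, (Z * Zᵀ) i j = ∑ j, ∑ k, Z i k * Z j k := by
        simp [Matrix.mul_apply, Matrix.transpose_apply]
    _ = ∑ k, Z i k * ∑ j, Z j k := by
        rw [Finset.sum_comm]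
        simp [Finset.mul_sum]
    _ = 0 := by simp [hcol]

/-- Centering the latent factors identifies the degree-heterogeneity parameter `α`
and the Gram matrix `Z Zᵀ` in the inner product latent space model. -/
theorem network_model_identifiability
    (n d d' : ℕ) (hn : 1 ≤ n)
    (α α' : Matrix (Fin n) (Fin 1) ℝ)
    (Z : Matrix (Fin n) (Fin d) ℝ) (Z' : Matrix (Fin n) (Fin d') ℝ)
    (hZ : (onesCol n)ᵀ * Z = 0) (hZ' : (onesCol n)ᵀ * Z' = 0)
    (heq : α * (onesCol n)ᵀ + onesCol n * αᵀ + Z * Zᵀ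
         = α' * (onesCol n)ᵀ + onesCol n * α'ᵀ + Z' * Z'ᵀ) :
    α = α' ∧ Z * Zᵀ = Z' * Z'ᵀ := by
  have key : ∀ i j, α i 0 + α j 0 + (Z * Zᵀ) i j
      = α' i 0 + α' j 0 + (Z' * Z'ᵀ) i j := by
    intro i j
    have := congrFun (congrFun heq i) j
    simpa [Matrix.add_apply, Matrix.mul_apply, onesCol, Fin.sum_univ_one] using this
  have hrow := gram_row_sum_zero Z hZ
  have hrow' := gram_row_sum_zero Z' hZ'
  set S := ∑ i, α i 0 with hS
  set S' := ∑ i, α' i 0 with hS'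
  have hsum : ∀ i, (n : ℝ) * α i 0 + S = (n : ℝ) * α' i 0 + S' := by
    intro i
    have h : ∑ j, (α i 0 + α j 0 + (Z * Zᵀ) i j)
        = ∑ j, (α' i 0 + α' j 0 + (Z' * Z'ᵀ) i j) :=
      Finset.sum_congr rfl (fun j _ => key i j)
    simpa [Finset.sum_add_distrib, hrow i, hrow' i, Finset.card_univ, mul_comm]
      using h
  have hSS : S = S' := by
    have h : ∑ i, ((n : ℝ) * α i 0 + S) = ∑ i, ((n : ℝ) * α' i 0 + S') :=
      Finset.sum_congr rfl (fun i _ => hsum i)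
    have hn' : (n : ℝ) ≠ 0 := by positivity
    simp only [Finset.sum_add_distrib, Finset.sum_const, Finset.card_univ,
      Fintype.card_fin, nsmul_eq_mul, ← Finset.mul_sum, ← hS, ← hS'] at h
    have h2 : (2 * (n : ℝ)) * S = (2 * (n : ℝ)) * S' := by ring_nf; ring_nf at h; linarith
    exact mul_left_cancel₀ (by positivity) h2
  have hα : α = α' := by
    ext i k
    have := hsum i
    rw [hSS] at this
    have hn' : (n : ℝ) ≠ 0 := by positivity
    have : α i 0 = α' i 0 := by
      have h2 : (n : ℝ) * α i 0 = (n : ℝ) * α' i 0 := by linarith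
      exact mul_left_cancel₀ hn' h2
    have hk : k = 0 := Subsingleton.elim k 0
    rw [hk]; exact this
  refine ⟨hα, ?_⟩
  ext i j
  have := key i j
  rw [congrFun (congrFun hα i) 0, congrFun (congrFun hα j) 0] at this
  linarith
end

section
/- (Theorem 1, condition IC1.) Let n, p, k ≥ 1. Let α, α* ∈ ℝ^n; μ, μ* ∈ ℝ^p; Z, Z* ∈ ℝ^{n×k} centered (1_nᵀ Z = 0, 1_nᵀ Z* = 0) with rank(Z) = k; Λ, Λ* ∈ ℝ^{p×k}; and let Ψ ∈ ℝ^{p×p} be diagonal with strictly positive diagonal entries. Assume: (i) α 1_nᵀ + 1_n αᵀ + Z Zᵀ = α* 1_nᵀ + 1_n α*ᵀ + Z* Z*ᵀ; (ii) 1_n μᵀ + Z Λᵀ = 1_n μ*ᵀ + Z* Λ*ᵀ; (iii) Λᵀ Ψ^{-1} Λ and Λ*ᵀ Ψ^{-1} Λ* are both diagonal with strictly decreasing diagonal entries; (iv) Z and Z* satisfy the positive-first-entry convention. Then α = α*, μ = μ*, Z = Z*, and Λ = Λ*. -/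
open Matrix

/-- The first nonzero entry of each column is positive. -/
def PosFirstEntry {n : ℕ} {κ : Type*} (Z : Matrix (Fin n) κ ℝ) : Prop :=
  ∀ (j : κ) (i : Fin n), (∀ i' : Fin n, i' < i → Z i' j = 0) → Z i j ≠ 0 → 0 < Z i j

/-- A square real matrix of full rank is a unit. -/
lemma isUnit_of_rank_eq {k : ℕ} (A : Matrix (Fin k) (Fin k) ℝ) (h : A.rank = k) : IsUnit A := by
  rw [← Matrix.mulVec_injective_iff_isUnit]
  have hsurj : Function.Surjective A.mulVecLin := by
    rw [← LinearMap.range_eq_top]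
    apply Submodule.eq_top_of_finrank_eq
    rw [Module.finrank_fin_fun]
    exact h
  exact (LinearMap.injective_iff_surjective.mpr hsurj)

/-- Left cancellation for a matrix whose Gram matrix is invertible. -/
lemma left_cancel {n k m : ℕ} (Z : Matrix (Fin n) (Fin k) ℝ) (hG : IsUnit (Zᵀ * Z))
    {A B : Matrix (Fin k) (Fin m) ℝ} (h : Z * A = Z * B) : A = B := by
  have h2 : Zᵀ * Z * A = Zᵀ * Z * B := by rw [Matrix.mul_assoc, h, Matrix.mul_assoc]
  have hinv := Matrix.nonsing_inv_mul (Zᵀ * Z) ((Matrix.isUnit_iff_isUnit_det _).mp hG)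
  calc A = ((Zᵀ * Z)⁻¹ * (Zᵀ * Z)) * A := by rw [hinv, Matrix.one_mul]
    _ = ((Zᵀ * Z)⁻¹ * (Zᵀ * Z)) * B := by rw [Matrix.mul_assoc, h2, ← Matrix.mul_assoc]
    _ = B := by rw [hinv, Matrix.one_mul]

/-- Two strictly antitone functions `Fin k → ℝ`, with the range of `g` contained in the
range of `f`, are equal. -/
lemma strictAnti_eq_of_range {k : ℕ} {f g : Fin k → ℝ} (hf : StrictAnti f) (hg : StrictAnti g)
    (h2 : ∀ j, ∃ i, g j = f i) : f = g := by
  have hrev : StrictAnti (Fin.rev : Fin k → Fin k) := fun i j hij => Fin.rev_lt_rev.mpr hij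
  have hF : StrictMono (f ∘ Fin.rev) := hf.comp hrev
  have hG : StrictMono (g ∘ Fin.rev) := hg.comp hrev
  set s : Finset ℝ := Finset.image f Finset.univ with hs
  have hcard : s.card = k := by
    rw [hs, Finset.card_image_of_injective _ hf.injective, Finset.card_univ, Fintype.card_fin]
  have hFs : ∀ x, (f ∘ Fin.rev) x ∈ s := fun x => Finset.mem_image_of_mem f (Finset.mem_univ _)
  have hGs : ∀ x, (g ∘ Fin.rev) x ∈ s := by
    intro x
    obtain ⟨i, hi⟩ := h2 x.rev
    simp only [Function.comp_apply, hi]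
    exact Finset.mem_image_of_mem f (Finset.mem_univ _)
  have hFeq := Finset.orderEmbOfFin_unique hcard hFs hF
  have hGeq := Finset.orderEmbOfFin_unique hcard hGs hG
  funext i
  have : (f ∘ Fin.rev) i.rev = (g ∘ Fin.rev) i.rev := by rw [hFeq, hGeq]
  simpa [Fin.rev_rev] using this

/-- From equality of Gram matrices and full column rank, extract an orthogonal matrix
relating the two factors. -/
lemma ortho_exists {n k : ℕ} (Z Z' : Matrix (Fin n) (Fin k) ℝ)
    (hrank : Z.rank = k) (hZZ : Z * Zᵀ = Z' * Z'ᵀ) :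
    ∃ O : Matrix (Fin k) (Fin k) ℝ, Z * O = Z' ∧ Oᵀ * O = 1 ∧ O * Oᵀ = 1 := by
  have hrank' : Z'.rank = k := by
    rw [← Matrix.rank_self_mul_transpose, ← hZZ, Matrix.rank_self_mul_transpose, hrank]
  have hG' : IsUnit (Z'ᵀ * Z') := by
    apply isUnit_of_rank_eq
    rw [Matrix.rank_transpose_mul_self, hrank']
  have hG'det := (Matrix.isUnit_iff_isUnit_det _).mp hG'
  have hG'inv : (Z'ᵀ * Z') * (Z'ᵀ * Z')⁻¹ = 1 := Matrix.mul_nonsing_inv _ hG'det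
  have hG'inv' : (Z'ᵀ * Z')⁻¹ * (Z'ᵀ * Z') = 1 := Matrix.nonsing_inv_mul _ hG'det
  set O : Matrix (Fin k) (Fin k) ℝ := Zᵀ * Z' * (Z'ᵀ * Z')⁻¹ with hO
  have hZO : Z * O = Z' := by
    have e : Z * O = (Z * Zᵀ) * Z' * (Z'ᵀ * Z')⁻¹ := by
      rw [hO]; simp only [Matrix.mul_assoc]
    rw [e, hZZ]
    have e2 : Z' * Z'ᵀ * Z' * (Z'ᵀ * Z')⁻¹ = Z' * ((Z'ᵀ * Z') * (Z'ᵀ * Z')⁻¹) := by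
      simp only [Matrix.mul_assoc]
    rw [e2, hG'inv, Matrix.mul_one]
  have hOtO : Oᵀ * O = 1 := by
    have hsymm : (Z'ᵀ * Z')ᵀ = Z'ᵀ * Z' := by
      rw [Matrix.transpose_mul, Matrix.transpose_transpose]
    have hOT : Oᵀ = (Z'ᵀ * Z')⁻¹ * (Z'ᵀ * Z) := by
      rw [hO, Matrix.transpose_mul, Matrix.transpose_mul, Matrix.transpose_nonsing_inv, hsymm,
        Matrix.transpose_transpose]
    have e : Oᵀ * O = (Z'ᵀ * Z')⁻¹ * Z'ᵀ * (Z * Zᵀ) * Z' * (Z'ᵀ * Z')⁻¹ := by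
      rw [hOT, hO]; simp only [Matrix.mul_assoc]
    rw [e, hZZ]
    have e2 : (Z'ᵀ * Z')⁻¹ * Z'ᵀ * (Z' * Z'ᵀ) * Z' * (Z'ᵀ * Z')⁻¹
        = ((Z'ᵀ * Z')⁻¹ * (Z'ᵀ * Z')) * ((Z'ᵀ * Z') * (Z'ᵀ * Z')⁻¹) := by
      simp only [Matrix.mul_assoc]
    rw [e2, hG'inv', hG'inv, Matrix.one_mul]
  exact ⟨O, hZO, hOtO, mul_eq_one_comm.mp hOtO⟩

/-- An orthogonal matrix intertwining two diagonal matrices with strictly decreasing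
diagonals is diagonal with `±1` entries. -/
lemma ortho_diag {k : ℕ} (O D D' : Matrix (Fin k) (Fin k) ℝ)
    (hOtO : Oᵀ * O = 1) (hOOt : O * Oᵀ = 1)
    (hD : D.IsDiag) (hD' : D'.IsDiag)
    (hanti : StrictAnti fun i => D i i) (hanti' : StrictAnti fun i => D' i i)
    (hrel : D' = Oᵀ * D * O) :
    (∀ i j, i ≠ j → O i j = 0) ∧ ∀ j, O j j * O j j = 1 := by
  have hDO : D * O = O * D' := by
    rw [hrel]
    calc D * O = (O * Oᵀ) * (D * O) := by rw [hOOt, Matrix.one_mul]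
    _ = O * (Oᵀ * D * O) := by simp only [Matrix.mul_assoc]
  have key : ∀ i j, D i i * O i j = O i j * D' j j := by
    intro i j
    have h := congrFun (congrFun hDO i) j
    rw [Matrix.mul_apply, Matrix.mul_apply] at h
    rw [Finset.sum_eq_single i (fun l _ hl => by rw [hD (Ne.symm hl), zero_mul])
      (fun h => absurd (Finset.mem_univ i) h)] at h
    rw [Finset.sum_eq_single j (fun l _ hl => by rw [hD' hl, mul_zero])
      (fun h => absurd (Finset.mem_univ j) h)] at h
    exact h
  have col_nonzero : ∀ j, ∃ i, O i j ≠ 0 := by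
    intro j
    by_contra hc
    push_neg at hc
    have h := congrFun (congrFun hOtO j) j
    rw [Matrix.mul_apply] at h
    simp only [Matrix.transpose_apply, Matrix.one_apply_eq] at h
    rw [Finset.sum_eq_zero (fun i _ => by rw [hc i, mul_zero])] at h
    exact zero_ne_one h
  have hdd : (fun i => D i i) = fun j => D' j j := by
    apply strictAnti_eq_of_range hanti hanti'
    intro j
    obtain ⟨i, hi⟩ := col_nonzero j
    refine ⟨i, ?_⟩
    have h := key i j
    rw [mul_comm (O i j) (D' j j)] at h
    exact (mul_right_cancel₀ hi h).symm
  have offdiag : ∀ i j, i ≠ j → O i j = 0 := by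
    intro i j hij
    have hne : D i i ≠ D' j j := by
      rw [← congrFun hdd j]
      exact fun h => hij (hanti.injective h)
    have h := key i j
    rw [mul_comm (O i j) (D' j j)] at h
    by_contra ho
    exact hne (mul_right_cancel₀ ho h)
  refine ⟨offdiag, fun j => ?_⟩
  have h := congrFun (congrFun hOtO j) j
  rw [Matrix.mul_apply] at h
  simp only [Matrix.transpose_apply, Matrix.one_apply_eq] at h
  rwa [Finset.sum_eq_single j (fun l _ hl => by rw [offdiag l j hl, mul_zero])
    (fun h => absurd (Finset.mem_univ j) h)] at h

/-- A diagonal `±1` matrix relating two matrices satisfying the positive-first-entry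
convention must be the identity. -/
lemma sign_fix {n k : ℕ} (Z Z' : Matrix (Fin n) (Fin k) ℝ) (O : Matrix (Fin k) (Fin k) ℝ)
    (hG : IsUnit (Zᵀ * Z)) (hZO : Z * O = Z')
    (hoff : ∀ i j, i ≠ j → O i j = 0) (hsq : ∀ j, O j j * O j j = 1)
    (hs : PosFirstEntry Z) (hs' : PosFirstEntry Z') : O = 1 := by
  have hginv := Matrix.nonsing_inv_mul (Zᵀ * Z) ((Matrix.isUnit_iff_isUnit_det _).mp hG)
  have colZ_ne : ∀ j, ∃ i, Z i j ≠ 0 := by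
    intro j
    by_contra hc
    push_neg at hc
    have h := congrFun (congrFun hginv j) j
    rw [Matrix.mul_apply] at h
    have hz : ∀ l, (Zᵀ * Z) l j = 0 := by
      intro l
      rw [Matrix.mul_apply]
      exact Finset.sum_eq_zero fun m _ => by rw [Matrix.transpose_apply, hc m, mul_zero]
    rw [Finset.sum_eq_zero (fun l _ => by rw [hz l, mul_zero])] at h
    simp at h
  have Z'e : ∀ i j, Z' i j = Z i j * O j j := by
    intro i j
    have h := congrFun (congrFun hZO i) j
    rw [Matrix.mul_apply,
      Finset.sum_eq_single j (fun l _ hl => by rw [hoff l j hl, mul_zero])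
        (fun h => absurd (Finset.mem_univ j) h)] at h
    exact h.symm
  have hOjj : ∀ j, O j j = 1 := by
    intro j
    have hOne : O j j ≠ 0 := by
      intro h
      have := hsq j
      rw [h, mul_zero] at this
      exact zero_ne_one this
    set s : Finset (Fin n) := Finset.univ.filter (fun i => Z i j ≠ 0) with hsdef
    have hsne : s.Nonempty := by
      obtain ⟨i, hi⟩ := colZ_ne j
      exact ⟨i, by simp [hsdef, hi]⟩
    set i₀ := s.min' hsne with hi₀
    have hne : Z i₀ j ≠ 0 := by
      have := s.min'_mem hsne
      simp only [hsdef, Finset.mem_filter] at this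
      exact this.2
    have hmin : ∀ i' : Fin n, i' < i₀ → Z i' j = 0 := by
      intro i' hlt
      by_contra hz
      exact absurd (s.min'_le i' (by simp [hsdef, hz])) (not_le.mpr hlt)
    have hpos := hs j i₀ hmin hne
    have hmin' : ∀ i' : Fin n, i' < i₀ → Z' i' j = 0 := by
      intro i' hlt
      rw [Z'e, hmin i' hlt, zero_mul]
    have hne' : Z' i₀ j ≠ 0 := by
      rw [Z'e]
      exact mul_ne_zero hne hOne
    have hpos' := hs' j i₀ hmin' hne'
    rw [Z'e] at hpos'
    have hOpos : 0 < O j j := by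
      rcases mul_pos_iff.mp hpos' with ⟨_, h⟩ | ⟨h, _⟩
      · exact h
      · linarith
    have hfac : (O j j - 1) * (O j j + 1) = 0 := by
      have := hsq j
      nlinarith
    rcases mul_eq_zero.mp hfac with h | h
    · linarith
    · linarith
  ext i j
  by_cases hij : i = j
  · subst hij
    rw [hOjj, Matrix.one_apply_eq]
  · rw [hoff i j hij, Matrix.one_apply_ne hij]

/-- Theorem 1 of the paper under identifiability condition IC1:
`Λᵀ Ψ⁻¹ Λ` diagonal with strictly decreasing (hence distinct) diagonal entries. -/
theorem identifiability_IC1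
    (n p k : ℕ) (hn : 1 ≤ n) (hp : 1 ≤ p) (hk : 1 ≤ k)
    (α α' : Matrix (Fin n) (Fin 1) ℝ)
    (μ μ' : Matrix (Fin p) (Fin 1) ℝ)
    (Z Z' : Matrix (Fin n) (Fin k) ℝ)
    (Λ Λ' : Matrix (Fin p) (Fin k) ℝ)
    (Ψ : Matrix (Fin p) (Fin p) ℝ)
    (hΨdiag : Ψ.IsDiag) (hΨpos : ∀ j, 0 < Ψ j j)
    (hZc : (onesCol n)ᵀ * Z = 0) (hZc' : (onesCol n)ᵀ * Z' = 0)
    (hrank : Z.rank = k)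
    (hnet : α * (onesCol n)ᵀ + onesCol n * αᵀ + Z * Zᵀ
          = α' * (onesCol n)ᵀ + onesCol n * α'ᵀ + Z' * Z'ᵀ)
    (hmean : onesCol n * μᵀ + Z * Λᵀ = onesCol n * μ'ᵀ + Z' * Λ'ᵀ)
    (hIC : (Λᵀ * Ψ⁻¹ * Λ).IsDiag ∧ StrictAnti fun i => (Λᵀ * Ψ⁻¹ * Λ) i i)
    (hIC' : (Λ'ᵀ * Ψ⁻¹ * Λ').IsDiag ∧ StrictAnti fun i => (Λ'ᵀ * Ψ⁻¹ * Λ') i i)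
    (hsign : PosFirstEntry Z) (hsign' : PosFirstEntry Z') :
    α = α' ∧ μ = μ' ∧ Z = Z' ∧ Λ = Λ' := by
  set u := onesCol n with hu
  have hnR : (0 : ℝ) < (n : ℝ) := by positivity
  have huu : uᵀ * u = (n : ℝ) • (1 : Matrix (Fin 1) (Fin 1) ℝ) := by
    ext i j
    simp [hu, onesCol, Matrix.mul_apply, Matrix.one_apply, Subsingleton.elim i j]
  have hZtu : Zᵀ * u = 0 := by
    have := congrArg Matrix.transpose hZc
    simpa [Matrix.transpose_mul] using this
  have hZtu' : Z'ᵀ * u = 0 := by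
    have := congrArg Matrix.transpose hZc'
    simpa [Matrix.transpose_mul] using this
  -- identification of μ
  have hmul := congrArg (fun M => uᵀ * M) hmean
  simp only [Matrix.mul_add, ← Matrix.mul_assoc, huu, hZc, hZc', Matrix.zero_mul,
    add_zero, Matrix.smul_mul, Matrix.one_mul] at hmul
  have hμT : μᵀ = μ'ᵀ := smul_right_injective _ (ne_of_gt hnR) hmul
  have hμ : μ = μ' := by
    have := congrArg Matrix.transpose hμT; simpa using this
  -- identification of α
  have e1 := congrArg (fun M => M * u) hnet
  simp only [Matrix.add_mul, Matrix.mul_assoc, huu, hZtu, hZtu', Matrix.mul_zero, add_zero,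
    Matrix.mul_smul, Matrix.mul_one] at e1
  have e2 := congrArg (fun M => uᵀ * M) e1
  simp only [Matrix.mul_add, Matrix.mul_smul, ← Matrix.mul_assoc, huu, Matrix.smul_mul,
    Matrix.one_mul] at e2
  have h11 : ∀ M : Matrix (Fin 1) (Fin 1) ℝ, Mᵀ = M := by
    intro M; ext i j; rw [Subsingleton.elim i j]; rfl
  have hT : uᵀ * α = αᵀ * u := by
    have := h11 (αᵀ * u); rw [Matrix.transpose_mul, Matrix.transpose_transpose] at this
    exact this
  have hT' : uᵀ * α' = α'ᵀ * u := by
    have := h11 (α'ᵀ * u); rw [Matrix.transpose_mul, Matrix.transpose_transpose] at this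
    exact this
  rw [hT, hT'] at e2
  have e3 : ((2 : ℝ) * n) • (αᵀ * u) = ((2 : ℝ) * n) • (α'ᵀ * u) := by
    rw [two_mul, add_smul, add_smul]
    convert e2 using 1
  have hau : αᵀ * u = α'ᵀ * u := smul_right_injective _ (by positivity) e3
  have hα : α = α' := by
    have h4 : (n : ℝ) • α = (n : ℝ) • α' := by
      have := e1; rw [hau] at this; exact add_right_cancel this
    exact smul_right_injective _ (ne_of_gt hnR) h4
  have hZZ : Z * Zᵀ = Z' * Z'ᵀ := by
    have := hnet; rw [hα] at this
    exact add_left_cancel this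
  have hZΛ : Z * Λᵀ = Z' * Λ'ᵀ := by
    have := hmean; rw [hμ] at this
    exact add_left_cancel this
  -- the orthogonal matrix O
  have hGZ : IsUnit (Zᵀ * Z) := by
    apply isUnit_of_rank_eq
    rw [Matrix.rank_transpose_mul_self, hrank]
  obtain ⟨O, hZO, hOtO, hOOt⟩ := ortho_exists Z Z' hrank hZZ
  -- Λ' = Λ * O
  have hΛT : Λᵀ = O * Λ'ᵀ := by
    apply left_cancel Z hGZ
    rw [hZΛ, ← hZO, Matrix.mul_assoc]
  have hΛ'T : Λ'ᵀ = Oᵀ * Λᵀ := by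
    rw [hΛT, ← Matrix.mul_assoc, hOtO, Matrix.one_mul]
  have hΛ' : Λ' = Λ * O := by
    have := congrArg Matrix.transpose hΛ'T
    rwa [Matrix.transpose_transpose, Matrix.transpose_mul, Matrix.transpose_transpose,
      Matrix.transpose_transpose] at this
  -- relation between the two diagonal matrices
  have hrel : Λ'ᵀ * Ψ⁻¹ * Λ' = Oᵀ * (Λᵀ * Ψ⁻¹ * Λ) * O := by
    rw [hΛ', Matrix.transpose_mul]
    simp only [Matrix.mul_assoc]
  obtain ⟨hoff, hsq⟩ := ortho_diag O (Λᵀ * Ψ⁻¹ * Λ) (Λ'ᵀ * Ψ⁻¹ * Λ') hOtO hOOt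
    hIC.1 hIC'.1 hIC.2 hIC'.2 hrel
  have hO1 : O = 1 := sign_fix Z Z' O hGZ hZO hoff hsq hsign hsign'
  have hZeq : Z = Z' := by rw [← hZO, hO1, Matrix.mul_one]
  have hΛeq : Λ = Λ' := by rw [hΛ', hO1, Matrix.mul_one]
  exact ⟨hα, hμ, hZeq, hΛeq⟩
end

section
/- (Theorem 1, condition IC2.) Let n, p, k ≥ 1. Let α, α* ∈ ℝ^n; μ, μ* ∈ ℝ^p; Z, Z* ∈ ℝ^{n×k} centered (1_nᵀ Z = 0, 1_nᵀ Z* = 0); and Λ, Λ* ∈ ℝ^{p×k}. Assume: (i) α 1_nᵀ + 1_n αᵀ + Z Zᵀ = α* 1_nᵀ + 1_n α*ᵀ + Z* Z*ᵀ; (ii) 1_n μᵀ + Z Λᵀ = 1_n μ*ᵀ + Z* Λ*ᵀ; (iii) Zᵀ Z and Z*ᵀ Z* are both diagonal with strictly decreasing, strictly positive diagonal entries (no restriction on Λ or Λ*); (iv) Z and Z* satisfy the positive-first-entry convention. Then α = α*, μ = μ*, Z = Z*, and Λ = Λ*. -/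
open Matrix

lemma sum_sum_mul {m k : ℕ} (u : Fin k → ℝ) (v : Fin m → Fin k → ℝ) (w : Fin m → ℝ) :
    ∑ j, (∑ ℓ, u ℓ * v j ℓ) * w j = ∑ ℓ, u ℓ * ∑ j, v j ℓ * w j := by
  simp only [Finset.sum_mul, mul_assoc, Finset.mul_sum]
  exact Finset.sum_comm

lemma sum_mul_sum_mul {m k : ℕ} (x : Fin m → ℝ) (v : Fin m → Fin k → ℝ) (c : Fin k → ℝ) :
    ∑ i, x i * ∑ a, v i a * c a = ∑ a, (∑ i, x i * v i a) * c a := by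
  simp only [Finset.mul_sum, Finset.sum_mul, mul_assoc]
  exact Finset.sum_comm

/-- In a column with some nonzero entry, the first nonzero entry of a
`PosFirstEntry` matrix is positive; we extract the index. -/
lemma exists_first_nonzero {n k : ℕ} (Z : Matrix (Fin n) (Fin k) ℝ) (b : Fin k)
    (h : ∃ i, Z i b ≠ 0) :
    ∃ i : Fin n, (∀ i' : Fin n, i' < i → Z i' b = 0) ∧ Z i b ≠ 0 := by
  classical
  obtain ⟨i0, hi0⟩ := h
  let s : Finset (Fin n) := Finset.univ.filter fun i => Z i b ≠ 0
  have hs : s.Nonempty := ⟨i0, by simp [s, hi0]⟩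
  refine ⟨s.min' hs, fun i' hi' => ?_, ?_⟩
  · by_contra hne
    exact absurd (s.min'_le i' (by simp [s, hne])) (not_le.2 hi')
  · have := s.min'_mem hs
    simpa [s] using this

/-- Theorem 1 of the paper under identifiability condition IC2:
`Zᵀ Z` diagonal with strictly decreasing, strictly positive diagonal entries;
no restriction on `Λ`. -/
theorem identifiability_IC2
    (n p k : ℕ) (hn : 1 ≤ n) (hp : 1 ≤ p) (hk : 1 ≤ k)
    (α α' : Matrix (Fin n) (Fin 1) ℝ)
    (μ μ' : Matrix (Fin p) (Fin 1) ℝ)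
    (Z Z' : Matrix (Fin n) (Fin k) ℝ)
    (Λ Λ' : Matrix (Fin p) (Fin k) ℝ)
    (hZc : (onesCol n)ᵀ * Z = 0) (hZc' : (onesCol n)ᵀ * Z' = 0)
    (hnet : α * (onesCol n)ᵀ + onesCol n * αᵀ + Z * Zᵀ
          = α' * (onesCol n)ᵀ + onesCol n * α'ᵀ + Z' * Z'ᵀ)
    (hmean : onesCol n * μᵀ + Z * Λᵀ = onesCol n * μ'ᵀ + Z' * Λ'ᵀ)
    (hIC : (Zᵀ * Z).IsDiag ∧ (StrictAnti fun i => (Zᵀ * Z) i i)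
            ∧ ∀ i, 0 < (Zᵀ * Z) i i)
    (hIC' : (Z'ᵀ * Z').IsDiag ∧ (StrictAnti fun i => (Z'ᵀ * Z') i i)
            ∧ ∀ i, 0 < (Z'ᵀ * Z') i i)
    (hsign : PosFirstEntry Z) (hsign' : PosFirstEntry Z') :
    α = α' ∧ μ = μ' ∧ Z = Z' ∧ Λ = Λ' := by
  classical
  obtain ⟨hZd, hZa, hZp⟩ := hIC
  obtain ⟨hZd', hZa', hZp'⟩ := hIC'
  have hnR : (0:ℝ) < (n:ℝ) := by exact_mod_cast Nat.lt_of_lt_of_le Nat.zero_lt_one hn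
  -- column sums vanish
  have hZ0 : ∀ j, ∑ i, Z i j = 0 := fun j => by
    have h := congrFun (congrFun hZc 0) j
    simpa [Matrix.mul_apply, onesCol] using h
  have hZ0' : ∀ j, ∑ i, Z' i j = 0 := fun j => by
    have h := congrFun (congrFun hZc' 0) j
    simpa [Matrix.mul_apply, onesCol] using h
  -- diagonal quantities
  set d : Fin k → ℝ := fun j => ∑ i, Z i j * Z i j with hd
  set d' : Fin k → ℝ := fun j => ∑ i, Z' i j * Z' i j with hd'
  have hdq : ∀ j, (Zᵀ * Z) j j = d j := fun j => by
    simp [Matrix.mul_apply, hd]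
  have hdq' : ∀ j, (Z'ᵀ * Z') j j = d' j := fun j => by
    simp [Matrix.mul_apply, hd']
  have hdpos : ∀ j, 0 < d j := fun j => by rw [← hdq]; exact hZp j
  have hdpos' : ∀ j, 0 < d' j := fun j => by rw [← hdq']; exact hZp' j
  have hdanti : StrictAnti d := fun a b hab => by
    simpa only [hdq] using hZa hab
  have hdanti' : StrictAnti d' := fun a b hab => by
    simpa only [hdq'] using hZa' hab
  have hDZ : ∀ a b, a ≠ b → ∑ i, Z i a * Z i b = 0 := fun a b h => by
    have := hZd h; simpa [Matrix.mul_apply] using this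
  have hDZ' : ∀ a b, a ≠ b → ∑ i, Z' i a * Z' i b = 0 := fun a b h => by
    have := hZd' h; simpa [Matrix.mul_apply] using this
  -- entrywise network equation
  have hnetE : ∀ i j, α i 0 + α j 0 + ∑ ℓ, Z i ℓ * Z j ℓ
      = α' i 0 + α' j 0 + ∑ ℓ, Z' i ℓ * Z' j ℓ := by
    intro i j
    have h := congrFun (congrFun hnet i) j
    simpa [Matrix.add_apply, Matrix.mul_apply, onesCol, Matrix.transpose_apply] using h
  -- cross terms vanish when summing over a row index
  have hcross : ∀ i, ∑ j, ∑ ℓ, Z i ℓ * Z j ℓ = 0 := fun i => by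
    rw [Finset.sum_comm]
    simp only [← Finset.mul_sum, hZ0, mul_zero, Finset.sum_const_zero]
  have hcross' : ∀ i, ∑ j, ∑ ℓ, Z' i ℓ * Z' j ℓ = 0 := fun i => by
    rw [Finset.sum_comm]
    simp only [← Finset.mul_sum, hZ0', mul_zero, Finset.sum_const_zero]
  -- α = α'
  set S : ℝ := ∑ j, α j 0 with hS
  set S' : ℝ := ∑ j, α' j 0 with hS'
  have key : ∀ i, (n:ℝ) * α i 0 + S = (n:ℝ) * α' i 0 + S' := by
    intro i
    have h : ∑ j, (α i 0 + α j 0 + ∑ ℓ, Z i ℓ * Z j ℓ)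
        = ∑ j, (α' i 0 + α' j 0 + ∑ ℓ, Z' i ℓ * Z' j ℓ) :=
      Finset.sum_congr rfl fun j _ => hnetE i j
    simpa [Finset.sum_add_distrib, Finset.sum_const, nsmul_eq_mul, hcross i, hcross' i,
      ← hS, ← hS'] using h
  have hSS : S = S' := by
    have h : ∑ i, ((n:ℝ) * α i 0 + S) = ∑ i, ((n:ℝ) * α' i 0 + S') :=
      Finset.sum_congr rfl fun i _ => key i
    simp only [Finset.sum_add_distrib, Finset.sum_const, Finset.card_univ, Fintype.card_fin,
      nsmul_eq_mul, ← Finset.mul_sum, ← hS, ← hS'] at h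
    have : (n:ℝ) * S + (n:ℝ) * S = (n:ℝ) * S' + (n:ℝ) * S' := h
    nlinarith [hnR]
  have hαfun : ∀ i, α i 0 = α' i 0 := by
    intro i
    have := key i
    rw [hSS] at this
    have := add_right_cancel this
    exact mul_left_cancel₀ hnR.ne' this
  have hα : α = α' := by
    ext i c
    have : c = 0 := Subsingleton.elim c 0
    rw [this]; exact hαfun i
  -- Gram matrices agree
  have hM : ∀ i j, ∑ ℓ, Z i ℓ * Z j ℓ = ∑ ℓ, Z' i ℓ * Z' j ℓ := by
    intro i j
    have h := hnetE i j
    rw [hαfun i, hαfun j] at h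
    exact add_left_cancel h
  -- B = Z'ᵀ Z
  set B : Fin k → Fin k → ℝ := fun a b => ∑ i, Z' i a * Z i b with hB
  -- E1 : M Z = Z D  and  M Z = Z' B
  have E1 : ∀ i b, Z i b * d b = ∑ a, Z' i a * B a b := by
    intro i b
    have h : ∑ j, (∑ ℓ, Z i ℓ * Z j ℓ) * Z j b
        = ∑ j, (∑ ℓ, Z' i ℓ * Z' j ℓ) * Z j b :=
      Finset.sum_congr rfl fun j _ => by rw [hM i j]
    rw [sum_sum_mul (fun ℓ => Z i ℓ) (fun j ℓ => Z j ℓ) (fun j => Z j b),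
      sum_sum_mul (fun ℓ => Z' i ℓ) (fun j ℓ => Z' j ℓ) (fun j => Z j b)] at h
    rw [Finset.sum_eq_single b (fun ℓ _ hℓ => by rw [hDZ ℓ b hℓ, mul_zero])
      (fun hb => absurd (Finset.mem_univ b) hb)] at h
    exact h
  have E1' : ∀ i b, Z' i b * d' b = ∑ a, Z i a * B b a := by
    intro i b
    have h : ∑ j, (∑ ℓ, Z' i ℓ * Z' j ℓ) * Z' j b
        = ∑ j, (∑ ℓ, Z i ℓ * Z j ℓ) * Z' j b :=
      Finset.sum_congr rfl fun j _ => by rw [hM i j]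
    rw [sum_sum_mul (fun ℓ => Z' i ℓ) (fun j ℓ => Z' j ℓ) (fun j => Z' j b),
      sum_sum_mul (fun ℓ => Z i ℓ) (fun j ℓ => Z j ℓ) (fun j => Z' j b)] at h
    rw [Finset.sum_eq_single b (fun ℓ _ hℓ => by rw [hDZ' ℓ b hℓ, mul_zero])
      (fun hb => absurd (Finset.mem_univ b) hb)] at h
    have hBc : ∀ a, ∑ j, Z j a * Z' j b = B b a := fun a =>
      Finset.sum_congr rfl fun j _ => mul_comm _ _
    simpa only [hBc] using h
  -- R1 : B D = D' B
  have R1 : ∀ c b, B c b * d b = d' c * B c b := by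
    intro c b
    have h : ∑ i, Z' i c * (Z i b * d b) = ∑ i, Z' i c * ∑ a, Z' i a * B a b :=
      Finset.sum_congr rfl fun i _ => by rw [E1 i b]
    rw [sum_mul_sum_mul (fun i => Z' i c) (fun i a => Z' i a) (fun a => B a b),
      Finset.sum_eq_single c (fun a _ ha => by rw [hDZ' c a ha.symm, zero_mul])
      (fun hc => absurd (Finset.mem_univ c) hc)] at h
    simp only [← mul_assoc, ← Finset.sum_mul] at h
    exact h
  -- R2 : Bᵀ B = D²
  have R2 : ∀ b, ∑ a, B a b * B a b = d b * d b := by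
    intro b
    have h : ∑ i, Z i b * (Z i b * d b) = ∑ i, Z i b * ∑ a, Z' i a * B a b :=
      Finset.sum_congr rfl fun i _ => by rw [E1 i b]
    rw [sum_mul_sum_mul (fun i => Z i b) (fun i a => Z' i a) (fun a => B a b)] at h
    simp only [← mul_assoc, ← Finset.sum_mul] at h
    have hBc : ∀ a, ∑ i, Z i b * Z' i a = B a b := fun a =>
      Finset.sum_congr rfl fun i _ => mul_comm _ _
    rw [show (∑ i, Z i b * Z i b) = d b from rfl] at h
    simp only [hBc] at h
    exact h.symm
  -- R3 : B Bᵀ = D'²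
  have R3 : ∀ b, ∑ a, B b a * B b a = d' b * d' b := by
    intro b
    have h : ∑ i, Z' i b * (Z' i b * d' b) = ∑ i, Z' i b * ∑ a, Z i a * B b a :=
      Finset.sum_congr rfl fun i _ => by rw [E1' i b]
    rw [sum_mul_sum_mul (fun i => Z' i b) (fun i a => Z i a) (fun a => B b a)] at h
    simp only [← mul_assoc, ← Finset.sum_mul] at h
    have hBc : ∀ a, ∑ i, Z' i b * Z i a = B b a := fun a => rfl
    rw [show (∑ i, Z' i b * Z' i b) = d' b from rfl] at h
    simp only [hBc] at h
    exact h.symm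
  -- each column / row of B has a nonzero entry
  have hcol : ∀ b, ∃ a, B a b ≠ 0 := by
    intro b
    by_contra h
    push_neg at h
    have h2 := R2 b
    simp only [h, mul_zero, Finset.sum_const_zero] at h2
    exact absurd h2.symm (mul_pos (hdpos b) (hdpos b)).ne'
  have hrow : ∀ b, ∃ a, B b a ≠ 0 := by
    intro b
    by_contra h
    push_neg at h
    have h3 := R3 b
    simp only [h, mul_zero, Finset.sum_const_zero] at h3
    exact absurd h3.symm (mul_pos (hdpos' b) (hdpos' b)).ne'
  have hne : ∀ a b, B a b ≠ 0 → d b = d' a := by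
    intro a b hab
    have h := R1 a b
    rw [mul_comm (d' a) (B a b)] at h
    exact mul_left_cancel₀ hab h
  -- d = d'
  have hdd : d = d' := by
    apply Set.range_injOn_strictAnti hdanti hdanti'
    apply Set.Subset.antisymm
    · rintro x ⟨b, rfl⟩
      obtain ⟨a, ha⟩ := hcol b
      exact ⟨a, (hne a b ha).symm⟩
    · rintro x ⟨a, rfl⟩
      obtain ⟨b, hb⟩ := hrow a
      exact ⟨b, hne a b hb⟩
  -- B is diagonal
  have hBdiag : ∀ a b, a ≠ b → B a b = 0 := by
    intro a b hab
    by_contra h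
    have := hne a b h
    rw [hdd] at this
    exact hab (hdanti'.injective this.symm)
  have hBsq : ∀ b, B b b * B b b = d b * d b := by
    intro b
    have h := R2 b
    rw [Finset.sum_eq_single b (fun a _ ha => by rw [hBdiag a b ha, mul_zero])
      (fun hb => absurd (Finset.mem_univ b) hb)] at h
    exact h
  -- Z columns determined up to sign
  have hZZ : ∀ i b, Z i b * d b = Z' i b * B b b := by
    intro i b
    rw [E1 i b, Finset.sum_eq_single b (fun a _ ha => by rw [hBdiag a b ha, mul_zero])
      (fun hb => absurd (Finset.mem_univ b) hb)]
  have hZeq : Z = Z' := by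
    ext i b
    rcases mul_self_eq_mul_self_iff.mp (hBsq b) with hpos | hneg
    · have h := hZZ i b
      rw [hpos] at h
      exact mul_right_cancel₀ (hdpos b).ne' h
    · -- B b b = -d b leads to a sign contradiction
      exfalso
      have hcase : ∀ i, Z i b = -Z' i b := by
        intro i
        have h := hZZ i b
        rw [hneg] at h
        have : Z i b * d b = -Z' i b * d b := by linarith [h]
        exact mul_right_cancel₀ (hdpos b).ne' this
      have hex : ∃ i, Z i b ≠ 0 := by
        by_contra hno
        push_neg at hno
        have : d b = 0 := by
          rw [hd]; simp only [hno, mul_zero, Finset.sum_const_zero]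
        exact (hdpos b).ne' this
      obtain ⟨i0, hzero, hnz⟩ := exists_first_nonzero Z b hex
      have hpos0 : 0 < Z i0 b := hsign b i0 hzero hnz
      have hzero' : ∀ i' : Fin n, i' < i0 → Z' i' b = 0 := by
        intro i' hi'
        have := hcase i'
        rw [hzero i' hi'] at this
        linarith
      have hnz' : Z' i0 b ≠ 0 := by
        intro h0
        rw [hcase i0, h0] at hnz
        simp at hnz
      have hpos0' : 0 < Z' i0 b := hsign' b i0 hzero' hnz'
      have := hcase i0
      linarith
  -- mean equation
  have hmeanE : ∀ (i : Fin n) (j : Fin p), μ j 0 + ∑ ℓ, Z i ℓ * Λ j ℓ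
      = μ' j 0 + ∑ ℓ, Z i ℓ * Λ' j ℓ := by
    intro i j
    have h := congrFun (congrFun hmean i) j
    rw [← hZeq] at h
    simpa [Matrix.add_apply, Matrix.mul_apply, onesCol, Matrix.transpose_apply] using h
  have hμfun : ∀ j, μ j 0 = μ' j 0 := by
    intro j
    have h : ∑ i, (μ j 0 + ∑ ℓ, Z i ℓ * Λ j ℓ) = ∑ i, (μ' j 0 + ∑ ℓ, Z i ℓ * Λ' j ℓ) :=
      Finset.sum_congr rfl fun i _ => hmeanE i j
    have hv : ∀ (Λ₀ : Matrix (Fin p) (Fin k) ℝ), ∑ i, ∑ ℓ, Z i ℓ * Λ₀ j ℓ = 0 := by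
      intro Λ₀
      rw [Finset.sum_comm]
      simp only [← Finset.sum_mul, hZ0, zero_mul, Finset.sum_const_zero]
    simp only [Finset.sum_add_distrib, Finset.sum_const, Finset.card_univ, Fintype.card_fin,
      nsmul_eq_mul, hv] at h
    have : (n:ℝ) * μ j 0 = (n:ℝ) * μ' j 0 := by linarith
    exact mul_left_cancel₀ hnR.ne' this
  have hμ : μ = μ' := by
    ext j c
    have : c = 0 := Subsingleton.elim c 0
    rw [this]; exact hμfun j
  -- Λ = Λ'
  have hΛ : Λ = Λ' := by
    ext j c
    have hrow2 : ∀ i, ∑ ℓ, Z i ℓ * Λ j ℓ = ∑ ℓ, Z i ℓ * Λ' j ℓ := by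
      intro i
      have h := hmeanE i j
      rw [hμfun j] at h
      exact add_left_cancel h
    have h : ∑ i, Z i c * ∑ ℓ, Z i ℓ * Λ j ℓ = ∑ i, Z i c * ∑ ℓ, Z i ℓ * Λ' j ℓ :=
      Finset.sum_congr rfl fun i _ => by rw [hrow2 i]
    rw [sum_mul_sum_mul (fun i => Z i c) (fun i a => Z i a) (fun a => Λ j a),
      sum_mul_sum_mul (fun i => Z i c) (fun i a => Z i a) (fun a => Λ' j a),
      Finset.sum_eq_single c (fun a _ ha => by rw [hDZ c a ha.symm, zero_mul])
        (fun hc => absurd (Finset.mem_univ c) hc),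
      Finset.sum_eq_single c (fun a _ ha => by rw [hDZ c a ha.symm, zero_mul])
        (fun hc => absurd (Finset.mem_univ c) hc)] at h
    exact mul_left_cancel₀ (hdpos c).ne' h
  exact ⟨hα, hμ, hZeq, hΛ⟩
end

section
/- (Corollary 1, condition set (1).) Let n, p ≥ 1 and k = k₁ + k₂ + k₃. Let Z = [Z₁ Z₂ Z₃] ∈ ℝ^{n×k} and Z* = [Z₁* Z₂* Z₃*] ∈ ℝ^{n×k} (blocks of column dimensions k₁, k₂, k₃) be centered with rank k; write Z₁₂ = [Z₁ Z₂] and Z₁₂* = [Z₁* Z₂*]. Let α, α* ∈ ℝ^n; μ, μ* ∈ ℝ^p; Λ₂, Λ₂* ∈ ℝ^{p×k₂}; Λ₃, Λ₃* ∈ ℝ^{p×k₃}; and let Ψ ∈ ℝ^{p×p} be diagonal with strictly positive diagonal entries. Assume: (i) α 1_nᵀ + 1_n αᵀ + Z₁₂ Z₁₂ᵀ = α* 1_nᵀ + 1_n α*ᵀ + Z₁₂* Z₁₂*ᵀ; (ii) 1_n μᵀ + Z₂ Λ₂ᵀ + Z₃ Λ₃ᵀ = 1_n μ*ᵀ + Z₂*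 Λ₂*ᵀ + Z₃* Λ₃*ᵀ; (iii) Z₁₂ᵀ Z₃ = 0 and Z₁₂*ᵀ Z₃* = 0; (iv) Λ₂ᵀ Ψ^{-1} Λ₂ and Λ₂*ᵀ Ψ^{-1} Λ₂* are diagonal with strictly decreasing, strictly positive diagonal entries; (v) the top k₃×k₃ blocks of Λ₃ and Λ₃* both equal the identity matrix I_{k₃}; (vi) Z and Z* satisfy the positive-first-entry convention. Then α = α*, μ = μ*, Z₂ = Z₂*, Z₃ = Z₃*, Λ₂ = Λ₂*, Λ₃ = Λ₃*, and Z₁ Z₁ᵀ = Z₁* Z₁*ᵀ (i.e., Z₁* = Z₁ H for some orthogonal k₁×k₁ matrix H). -/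
open Matrix

section AuxIdent

variable {m n c : Type*} [Fintype m] [Fintype n] [DecidableEq n]

omit [Fintype n] [DecidableEq n] in
lemma transpose_one_by_one (M : Matrix (Fin 1) (Fin 1) ℝ) : Mᵀ = M := by
  ext i j
  rw [Matrix.transpose_apply]
  congr 1 <;> exact Subsingleton.elim _ _

omit [Fintype n] [DecidableEq n] in
lemma eq_zero_of_transpose_mul_self_eq_zero {B : Matrix m n ℝ} (h : Bᵀ * B = 0) : B = 0 := by
  ext i j
  have hj : (Bᵀ * B) j j = 0 := by rw [h]; rfl
  rw [Matrix.mul_apply] at hj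
  have hnn : ∀ i ∈ Finset.univ, (0:ℝ) ≤ Bᵀ j i * B i j := by
    intro i _
    rw [Matrix.transpose_apply]
    exact mul_self_nonneg _
  have := (Finset.sum_eq_zero_iff_of_nonneg hnn).mp hj i (Finset.mem_univ i)
  rw [Matrix.transpose_apply] at this
  simpa using mul_self_eq_zero.mp this

lemma gram_isUnit_of_cancel {Z : Matrix m n ℝ}
    (h : ∀ x : n → ℝ, Z.mulVec x = 0 → x = 0) : IsUnit (Zᵀ * Z) := by
  rw [← Matrix.mulVec_injective_iff_isUnit]
  intro x y hxy
  have h0 : (Zᵀ * Z).mulVec (x - y) = 0 := by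
    rw [Matrix.mulVec_sub, hxy, sub_self]
  have hz : Z.mulVec (x - y) = 0 := by
    have hd : (Z.mulVec (x - y)) ⬝ᵥ (Z.mulVec (x - y)) = 0 := by
      have : (x - y) ⬝ᵥ (Zᵀ * Z).mulVec (x - y) = 0 := by rw [h0, dotProduct_zero]
      rwa [← Matrix.mulVec_mulVec, Matrix.dotProduct_mulVec, Matrix.vecMul_transpose] at this
    exact dotProduct_self_eq_zero.mp hd
  exact sub_eq_zero.mp (h _ hz)

lemma mulVec_cancel_of_gram_isUnit {Z : Matrix m n ℝ} (hU : IsUnit (Zᵀ * Z))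
    {x : n → ℝ} (hx : Z.mulVec x = 0) : x = 0 := by
  have := Matrix.mulVec_injective_iff_isUnit.mpr hU
  have h0 : (Zᵀ * Z).mulVec x = (Zᵀ * Z).mulVec 0 := by
    rw [← Matrix.mulVec_mulVec, hx, Matrix.mulVec_zero, Matrix.mulVec_zero]
  exact this h0

lemma matmul_cancel_of_gram_isUnit {Z : Matrix m n ℝ} (hU : IsUnit (Zᵀ * Z))
    {X : Matrix n c ℝ} (hX : Z * X = 0) : X = 0 := by
  have hdet := (Matrix.isUnit_iff_isUnit_det _).mp hU
  have hinv := Matrix.nonsing_inv_mul _ hdet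
  calc X = ((Zᵀ * Z)⁻¹ * (Zᵀ * Z)) * X := by rw [hinv, Matrix.one_mul]
    _ = (Zᵀ * Z)⁻¹ * (Zᵀ * (Z * X)) := by rw [Matrix.mul_assoc, Matrix.mul_assoc]
    _ = 0 := by rw [hX, Matrix.mul_zero, Matrix.mul_zero]

lemma gram_isUnit_of_rank {Z : Matrix m n ℝ} (h : Z.rank = Fintype.card n) :
    IsUnit (Zᵀ * Z) := by
  have hr : (Zᵀ * Z).rank = Fintype.card n := by rw [Matrix.rank_transpose_mul_self, h]
  rw [← Matrix.mulVec_surjective_iff_isUnit]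
  have htop : LinearMap.range (Zᵀ * Z).mulVecLin = ⊤ := by
    apply Submodule.eq_top_of_finrank_eq
    rw [← Matrix.rank, hr]
    simp
  intro v
  obtain ⟨w, hw⟩ := LinearMap.range_eq_top.mp htop v
  exact ⟨w, hw⟩

lemma exists_col_entry_ne_zero_of_cancel {M : Matrix m n ℝ}
    (h : ∀ x : n → ℝ, M.mulVec x = 0 → x = 0) (j : n) : ∃ i, M i j ≠ 0 := by
  by_contra hcon
  push_neg at hcon
  have hx : M.mulVec (fun q => if q = j then 1 else 0) = 0 := by
    funext i
    rw [Matrix.mulVec, dotProduct]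
    simp [Finset.sum_ite_eq', hcon i]
  have := congrFun (h _ hx) j
  simp at this

lemma strictMono_surj_fin_eq_id {k : ℕ} {σ : Fin k → Fin k} (h1 : StrictMono σ)
    (h2 : Function.Surjective σ) : σ = id := by
  have : Set.range σ = Set.range (id : Fin k → Fin k) := by
    rw [Set.range_eq_univ.mpr h2, Set.range_id]
  exact (@StrictMono.range_inj (Fin k) (Fin k) _ _
    (inferInstance : WellFoundedLT (Fin k)) σ id h1 strictMono_id).mp this

end AuxIdent

set_option maxHeartbeats 1000000 in
/-- Corollary 1 of the paper, condition set (1): `Z₁₂ᵀ Z₃ = 0`, `Λ₂ᵀ Ψ⁻¹ Λ₂` diagonal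
with strictly decreasing positive entries, and `Λ₃` contains the submatrix `I_{k₃}`
as its top block. -/
theorem identifiability_general_IC1
    (n p k₁ k₂ k₃ : ℕ) (hn : 1 ≤ n) (hp : 1 ≤ p) (hk₃p : k₃ ≤ p)
    (Z₁ Z₁' : Matrix (Fin n) (Fin k₁) ℝ)
    (Z₂ Z₂' : Matrix (Fin n) (Fin k₂) ℝ)
    (Z₃ Z₃' : Matrix (Fin n) (Fin k₃) ℝ)
    (α α' : Matrix (Fin n) (Fin 1) ℝ)
    (μ μ' : Matrix (Fin p) (Fin 1) ℝ)
    (Λ₂ Λ₂' : Matrix (Fin p) (Fin k₂) ℝ)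
    (Λ₃ Λ₃' : Matrix (Fin p) (Fin k₃) ℝ)
    (Ψ : Matrix (Fin p) (Fin p) ℝ)
    (hΨdiag : Ψ.IsDiag) (hΨpos : ∀ j, 0 < Ψ j j)
    (Z₁₂ Z₁₂' : Matrix (Fin n) (Fin k₁ ⊕ Fin k₂) ℝ)
    (hZ₁₂ : Z₁₂ = fromCols Z₁ Z₂) (hZ₁₂' : Z₁₂' = fromCols Z₁' Z₂')
    (Zf Zf' : Matrix (Fin n) ((Fin k₁ ⊕ Fin k₂) ⊕ Fin k₃) ℝ)
    (hZf : Zf = fromCols Z₁₂ Z₃) (hZf' : Zf' = fromCols Z₁₂' Z₃')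
    -- centered with rank k
    (hc : (onesCol n)ᵀ * Zf = 0) (hc' : (onesCol n)ᵀ * Zf' = 0)
    (hrank : Zf.rank = k₁ + k₂ + k₃) (hrank' : Zf'.rank = k₁ + k₂ + k₃)
    -- (i) equal network probability matrices
    (hnet : α * (onesCol n)ᵀ + onesCol n * αᵀ + Z₁₂ * Z₁₂ᵀ
          = α' * (onesCol n)ᵀ + onesCol n * α'ᵀ + Z₁₂' * Z₁₂'ᵀ)
    -- (ii) equal mean matrices
    (hmean : onesCol n * μᵀ + Z₂ * Λ₂ᵀ + Z₃ * Λ₃ᵀ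
           = onesCol n * μ'ᵀ + Z₂' * Λ₂'ᵀ + Z₃' * Λ₃'ᵀ)
    -- (iii) orthogonality between shared/network factors and individual factors
    (horth : Z₁₂ᵀ * Z₃ = 0) (horth' : Z₁₂'ᵀ * Z₃' = 0)
    -- (iv) Λ₂ᵀ Ψ⁻¹ Λ₂ diagonal with strictly decreasing, strictly positive entries
    (hIC : (Λ₂ᵀ * Ψ⁻¹ * Λ₂).IsDiag ∧ (StrictAnti fun i => (Λ₂ᵀ * Ψ⁻¹ * Λ₂) i i)
            ∧ ∀ i, 0 < (Λ₂ᵀ * Ψ⁻¹ * Λ₂) i i)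
    (hIC' : (Λ₂'ᵀ * Ψ⁻¹ * Λ₂').IsDiag ∧ (StrictAnti fun i => (Λ₂'ᵀ * Ψ⁻¹ * Λ₂') i i)
            ∧ ∀ i, 0 < (Λ₂'ᵀ * Ψ⁻¹ * Λ₂') i i)
    -- (v) top k₃ × k₃ block of Λ₃ equals the identity
    (htop : ∀ i j : Fin k₃, Λ₃ (Fin.castLE hk₃p i) j = (1 : Matrix (Fin k₃) (Fin k₃) ℝ) i j)
    (htop' : ∀ i j : Fin k₃, Λ₃' (Fin.castLE hk₃p i) j = (1 : Matrix (Fin k₃) (Fin k₃) ℝ) i j)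
    -- (vi) sign convention
    (hsign : PosFirstEntry Zf) (hsign' : PosFirstEntry Zf') :
    α = α' ∧ μ = μ' ∧ Z₂ = Z₂' ∧ Z₃ = Z₃' ∧ Λ₂ = Λ₂' ∧ Λ₃ = Λ₃'
      ∧ Z₁ * Z₁ᵀ = Z₁' * Z₁'ᵀ
      ∧ ∃ H : Matrix (Fin k₁) (Fin k₁) ℝ, H * Hᵀ = 1 ∧ Z₁' = Z₁ * H := by
  -- Notation
  set e : Matrix (Fin n) (Fin 1) ℝ := onesCol n with he
  -- centered blocks
  have hsplit : ∀ (W₁₂ : Matrix (Fin n) (Fin k₁ ⊕ Fin k₂) ℝ) (W₃ : Matrix (Fin n) (Fin k₃) ℝ),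
      eᵀ * fromCols W₁₂ W₃ = 0 → eᵀ * W₁₂ = 0 ∧ eᵀ * W₃ = 0 := by
    intro W₁₂ W₃ h
    rw [Matrix.mul_fromCols] at h
    constructor
    · ext i j; have := congrFun (congrFun h i) (Sum.inl j); simpa using this
    · ext i j; have := congrFun (congrFun h i) (Sum.inr j); simpa using this
  obtain ⟨hcZ12, hcZ3⟩ := hsplit _ _ (hZf ▸ hc)
  obtain ⟨hcZ12', hcZ3'⟩ := hsplit _ _ (hZf' ▸ hc')
  have hcZ2 : eᵀ * Z₂ = 0 := by
    rw [hZ₁₂, Matrix.mul_fromCols] at hcZ12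
    ext i j; have := congrFun (congrFun hcZ12 i) (Sum.inr j); simpa using this
  have hcZ2' : eᵀ * Z₂' = 0 := by
    rw [hZ₁₂', Matrix.mul_fromCols] at hcZ12'
    ext i j; have := congrFun (congrFun hcZ12' i) (Sum.inr j); simpa using this
  -- e-facts
  have hee : eᵀ * e = (n : ℝ) • (1 : Matrix (Fin 1) (Fin 1) ℝ) := by
    ext i j
    have hij : i = j := Subsingleton.elim i j
    simp [he, onesCol, Matrix.mul_apply, hij, Matrix.one_apply]
  have hZ12e : Z₁₂ᵀ * e = 0 := by
    have := congrArg Matrix.transpose hcZ12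
    simpa [Matrix.transpose_mul] using this
  have hZ12e' : Z₁₂'ᵀ * e = 0 := by
    have := congrArg Matrix.transpose hcZ12'
    simpa [Matrix.transpose_mul] using this
  have hnpos : (0:ℝ) < (n:ℝ) := by exact_mod_cast hn
  -- Step A : α = α'
  have hEq1 : (n:ℝ) • α + e * (αᵀ * e) = (n:ℝ) • α' + e * (α'ᵀ * e) := by
    have h1 := congrArg (· * e) hnet
    simp only [Matrix.add_mul, Matrix.mul_assoc] at h1
    rwa [hee, hZ12e, hZ12e', Matrix.mul_zero, Matrix.mul_zero, Matrix.mul_smul, Matrix.mul_one,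
      Matrix.mul_smul, Matrix.mul_one, add_zero, add_zero] at h1
  have hs : αᵀ * e = α'ᵀ * e := by
    have h2 := congrArg (eᵀ * ·) hEq1
    simp only [Matrix.mul_add, Matrix.mul_smul, ← Matrix.mul_assoc, hee, Matrix.smul_mul,
      Matrix.one_mul] at h2
    rw [show eᵀ * α = αᵀ * e by rw [← transpose_one_by_one (eᵀ * α)]; simp [Matrix.transpose_mul],
      show eᵀ * α' = α'ᵀ * e by
        rw [← transpose_one_by_one (eᵀ * α')]; simp [Matrix.transpose_mul]] at h2
    have h3 : (2 * (n:ℝ)) • (αᵀ * e) = (2 * (n:ℝ)) • (α'ᵀ * e) := by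
      rw [mul_smul, mul_smul, two_smul, two_smul]
      exact h2
    have h2n : (2 * (n:ℝ)) ≠ 0 := by positivity
    exact smul_right_injective _ h2n h3
  have hα : α = α' := by
    rw [hs] at hEq1
    have := add_right_cancel hEq1
    exact smul_right_injective _ (ne_of_gt hnpos) this
  -- equal Gram matrices of Z₁₂
  have hP : Z₁₂ * Z₁₂ᵀ = Z₁₂' * Z₁₂'ᵀ := by
    rw [hα] at hnet
    exact add_left_cancel hnet
  -- Step B : μ = μ'
  have hμ : μ = μ' := by
    have h1 := congrArg (eᵀ * ·) hmean
    simp only [Matrix.mul_add, ← Matrix.mul_assoc, hee, hcZ2, hcZ2', hcZ3, hcZ3',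
      Matrix.zero_mul, add_zero, Matrix.smul_mul, Matrix.one_mul] at h1
    have h2 : μᵀ = μ'ᵀ := smul_right_injective _ (ne_of_gt hnpos) h1
    have := congrArg Matrix.transpose h2
    simpa using this
  have hM : Z₂ * Λ₂ᵀ + Z₃ * Λ₃ᵀ = Z₂' * Λ₂'ᵀ + Z₃' * Λ₃'ᵀ := by
    rw [hμ] at hmean
    rw [add_assoc, add_assoc] at hmean
    exact add_left_cancel hmean
  -- Gram units and cancellation properties
  have hUf : IsUnit (Zfᵀ * Zf) := gram_isUnit_of_rank (by rw [hrank]; simp)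
  have hcanf : ∀ x, Zf.mulVec x = 0 → x = 0 := fun _ hx => mulVec_cancel_of_gram_isUnit hUf hx
  have hcan12 : ∀ x : (Fin k₁ ⊕ Fin k₂) → ℝ, Z₁₂.mulVec x = 0 → x = 0 := by
    intro x hx
    have h0 : Zf.mulVec (Sum.elim x 0) = 0 := by
      rw [hZf, fromCols_mulVec_sumElim, hx, Matrix.mulVec_zero, add_zero]
    funext q
    exact congrFun (hcanf _ h0) (Sum.inl q)
  have hcan3 : ∀ x : Fin k₃ → ℝ, Z₃.mulVec x = 0 → x = 0 := by
    intro x hx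
    have h0 : Zf.mulVec (Sum.elim 0 x) = 0 := by
      rw [hZf, fromCols_mulVec_sumElim, hx, Matrix.mulVec_zero, zero_add]
    funext q
    exact congrFun (hcanf _ h0) (Sum.inr q)
  have hU12 : IsUnit (Z₁₂ᵀ * Z₁₂) := gram_isUnit_of_cancel hcan12
  have hU3 : IsUnit (Z₃ᵀ * Z₃) := gram_isUnit_of_cancel hcan3
  -- the projector onto the column space of Z₁₂
  set G : Matrix (Fin k₁ ⊕ Fin k₂) (Fin k₁ ⊕ Fin k₂) ℝ := Z₁₂ᵀ * Z₁₂ with hGdef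
  have hGdet : IsUnit G.det := (Matrix.isUnit_iff_isUnit_det _).mp hU12
  have hGinv : G⁻¹ * G = 1 := Matrix.nonsing_inv_mul _ hGdet
  have hGinvsym : (G⁻¹)ᵀ = G⁻¹ := by
    rw [hGdef, Matrix.transpose_nonsing_inv, Matrix.transpose_mul, Matrix.transpose_transpose]
  set P : Matrix (Fin n) (Fin n) ℝ := Z₁₂ * G⁻¹ * Z₁₂ᵀ with hPdef
  have hPZ : P * Z₁₂ = Z₁₂ := by
    rw [hPdef, Matrix.mul_assoc, Matrix.mul_assoc, ← hGdef, hGinv, Matrix.mul_one]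
  have hPsym : Pᵀ = P := by
    rw [hPdef, Matrix.transpose_mul, Matrix.transpose_mul, Matrix.transpose_transpose, hGinvsym,
      ← Matrix.mul_assoc]
  have hZtP : Z₁₂ᵀ * P = Z₁₂ᵀ := by
    have h := congrArg Matrix.transpose hPZ
    rwa [Matrix.transpose_mul, hPsym] at h
  have hk1 : P * (Z₁₂' * Z₁₂'ᵀ) = Z₁₂' * Z₁₂'ᵀ := by
    rw [← hP, ← Matrix.mul_assoc, hPZ]
  have hk2 : (Z₁₂' * Z₁₂'ᵀ) * P = Z₁₂' * Z₁₂'ᵀ := by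
    rw [← hP, Matrix.mul_assoc, hZtP]
  have t1 : Z₁₂' * (Z₁₂'ᵀ * P) = Z₁₂' * Z₁₂'ᵀ := by rw [← Matrix.mul_assoc, hk2]
  have t2 : P * Z₁₂' * Z₁₂'ᵀ = Z₁₂' * Z₁₂'ᵀ := by rw [Matrix.mul_assoc, hk1]
  have t3 : P * Z₁₂' * (Z₁₂'ᵀ * P) = Z₁₂' * Z₁₂'ᵀ := by rw [Matrix.mul_assoc, t1, hk1]
  have hNN : (Z₁₂' - P * Z₁₂') * (Z₁₂' - P * Z₁₂')ᵀ = 0 := by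
    rw [Matrix.transpose_sub, Matrix.transpose_mul, hPsym, Matrix.sub_mul, Matrix.mul_sub,
      Matrix.mul_sub, t1, t2, t3]
    simp
  have hNzero : Z₁₂' = P * Z₁₂' := by
    have h := eq_zero_of_transpose_mul_self_eq_zero (B := (Z₁₂' - P * Z₁₂')ᵀ)
      (by rwa [Matrix.transpose_transpose])
    have h2 : Z₁₂' - P * Z₁₂' = 0 := by
      have := congrArg Matrix.transpose h
      simpa using this
    exact sub_eq_zero.mp h2
  set A : Matrix (Fin k₁ ⊕ Fin k₂) (Fin k₁ ⊕ Fin k₂) ℝ := G⁻¹ * Z₁₂ᵀ * Z₁₂' with hAdef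
  have hZA : Z₁₂' = Z₁₂ * A := by
    rw [hAdef]
    calc Z₁₂' = P * Z₁₂' := hNzero
      _ = Z₁₂ * (G⁻¹ * Z₁₂ᵀ * Z₁₂') := by rw [hPdef]; simp only [Matrix.mul_assoc]
  -- A is orthogonal
  have hAAt : A * Aᵀ = 1 := by
    have key : ∀ (X : Matrix (Fin n) (Fin k₁ ⊕ Fin k₂) ℝ)
        (B : Matrix (Fin k₁ ⊕ Fin k₂) (Fin k₁ ⊕ Fin k₂) ℝ),
        (X * B) * (X * B)ᵀ = X * ((B * Bᵀ) * Xᵀ) := by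
      intro X B
      rw [Matrix.transpose_mul]
      simp only [Matrix.mul_assoc]
    have h2 : Z₁₂ * ((A * Aᵀ) * Z₁₂ᵀ) = Z₁₂ * Z₁₂ᵀ := by
      rw [← key Z₁₂ A, ← hZA, ← hP]
    have h3 : (A * Aᵀ) * Z₁₂ᵀ - Z₁₂ᵀ = 0 :=
      matmul_cancel_of_gram_isUnit hU12 (by rw [Matrix.mul_sub, h2, sub_self])
    have h4 : (A * Aᵀ) * Z₁₂ᵀ = Z₁₂ᵀ := sub_eq_zero.mp h3
    have h5 : Z₁₂ * (A * Aᵀ) = Z₁₂ := by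
      have := congrArg Matrix.transpose h4
      rwa [Matrix.transpose_mul, Matrix.transpose_transpose, Matrix.transpose_mul,
        Matrix.transpose_transpose] at this
    have h6 : Z₁₂ * ((A * Aᵀ) - 1) = 0 := by
      rw [Matrix.mul_sub, Matrix.mul_one, h5, sub_self]
    exact sub_eq_zero.mp (matmul_cancel_of_gram_isUnit hU12 h6)
  have hAtA : Aᵀ * A = 1 := mul_eq_one_comm.mp hAAt
  -- Z₁₂ is orthogonal to Z₃' as well
  have hZ12tZ3' : Z₁₂ᵀ * Z₃' = 0 := by
    have h1 : Aᵀ * (Z₁₂ᵀ * Z₃') = 0 := by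
      rw [hZA, Matrix.transpose_mul, Matrix.mul_assoc] at horth'
      exact horth'
    calc Z₁₂ᵀ * Z₃' = (A * Aᵀ) * (Z₁₂ᵀ * Z₃') := by rw [hAAt, Matrix.one_mul]
      _ = A * (Aᵀ * (Z₁₂ᵀ * Z₃')) := by rw [Matrix.mul_assoc]
      _ = 0 := by rw [h1, Matrix.mul_zero]
  -- split the mean equation into shared and individual parts
  set S : Matrix (Fin k₁ ⊕ Fin k₂) (Fin k₂) ℝ :=
    fromRows (0 : Matrix (Fin k₁) (Fin k₂) ℝ) (1 : Matrix (Fin k₂) (Fin k₂) ℝ) with hSdef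
  have hZ2S : Z₂ = Z₁₂ * S := by
    rw [hZ₁₂, hSdef, fromCols_mul_fromRows, Matrix.mul_zero, Matrix.mul_one, zero_add]
  have hZ2S' : Z₂' = Z₁₂' * S := by
    rw [hZ₁₂', hSdef, fromCols_mul_fromRows, Matrix.mul_zero, Matrix.mul_one, zero_add]
  set W : Matrix (Fin k₁ ⊕ Fin k₂) (Fin p) ℝ := S * Λ₂ᵀ - A * (S * Λ₂'ᵀ) with hWdef
  have hZW : Z₁₂ * W = Z₃' * Λ₃'ᵀ - Z₃ * Λ₃ᵀ := by
    rw [hWdef, Matrix.mul_sub, ← Matrix.mul_assoc, ← hZ2S, ← Matrix.mul_assoc, ← hZA,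
      ← Matrix.mul_assoc, ← hZ2S']
    rw [sub_eq_sub_iff_add_eq_add, hM, add_comm]
  have hGW : G * W = 0 := by
    rw [hGdef, Matrix.mul_assoc, hZW, Matrix.mul_sub, ← Matrix.mul_assoc, ← Matrix.mul_assoc,
      hZ12tZ3', horth, Matrix.zero_mul, Matrix.zero_mul, sub_self]
  have hW0 : W = 0 := by
    calc W = (G⁻¹ * G) * W := by rw [hGinv, Matrix.one_mul]
      _ = G⁻¹ * (G * W) := by rw [Matrix.mul_assoc]
      _ = 0 := by rw [hGW, Matrix.mul_zero]
  have hSL : S * Λ₂ᵀ = A * (S * Λ₂'ᵀ) := by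
    have := sub_eq_zero.mp (hWdef ▸ hW0)
    exact this
  have hstar3 : Z₃ * Λ₃ᵀ = Z₃' * Λ₃'ᵀ := by
    have h := hZW
    rw [hW0, Matrix.mul_zero] at h
    have := sub_eq_zero.mp h.symm
    exact this.symm
  have hstar2 : Z₂ * Λ₂ᵀ = Z₂' * Λ₂'ᵀ := by
    have h := hM
    rw [hstar3] at h
    exact add_right_cancel h
  -- Z₃ = Z₃' using the identity top block
  have hZ3 : Z₃ = Z₃' := by
    ext i j
    have h1 := congrFun (congrFun hstar3 i) (Fin.castLE hk₃p j)
    rw [Matrix.mul_apply, Matrix.mul_apply] at h1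
    simp only [Matrix.transpose_apply, htop, htop', Matrix.one_apply] at h1
    simpa [Finset.sum_ite_eq', mul_comm] using h1
  have hΛ3 : Λ₃ = Λ₃' := by
    have h : Z₃ * (Λ₃ᵀ - Λ₃'ᵀ) = 0 := by
      rw [Matrix.mul_sub, hstar3, hZ3, sub_self]
    have h2 := sub_eq_zero.mp (matmul_cancel_of_gram_isUnit hU3 h)
    have := congrArg Matrix.transpose h2
    simpa using this
  -- block decomposition of A
  set B₁₁ := A.toBlocks₁₁ with hB11def
  set B₁₂ := A.toBlocks₁₂ with hB12def
  set B₂₁ := A.toBlocks₂₁ with hB21def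
  set B₂₂ := A.toBlocks₂₂ with hB22def
  have hAblocks : A = fromBlocks B₁₁ B₁₂ B₂₁ B₂₂ := (fromBlocks_toBlocks A).symm
  have hSL2 : fromRows (0 : Matrix (Fin k₁) (Fin p) ℝ) Λ₂ᵀ
      = fromRows (B₁₂ * Λ₂'ᵀ) (B₂₂ * Λ₂'ᵀ) := by
    have h1 : S * Λ₂ᵀ = fromRows 0 Λ₂ᵀ := by
      rw [hSdef, fromRows_mul, Matrix.zero_mul, Matrix.one_mul]
    have h2 : S * Λ₂'ᵀ = fromRows 0 Λ₂'ᵀ := by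
      rw [hSdef, fromRows_mul, Matrix.zero_mul, Matrix.one_mul]
    have h3 : A * (S * Λ₂'ᵀ) = fromRows (B₁₂ * Λ₂'ᵀ) (B₂₂ * Λ₂'ᵀ) := by
      rw [h2, hAblocks, fromBlocks_mul_fromRows, Matrix.mul_zero, Matrix.mul_zero,
        zero_add, zero_add]
    rw [← h1, hSL, h3]
  have hB12L : B₁₂ * Λ₂'ᵀ = 0 := by
    have h := congrArg Matrix.toRows₁ hSL2
    simpa using h.symm
  have hLam : Λ₂ᵀ = B₂₂ * Λ₂'ᵀ := by
    have h := congrArg Matrix.toRows₂ hSL2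
    simpa using h
  -- D and D'
  set D : Matrix (Fin k₂) (Fin k₂) ℝ := Λ₂ᵀ * Ψ⁻¹ * Λ₂ with hDdef
  set D' : Matrix (Fin k₂) (Fin k₂) ℝ := Λ₂'ᵀ * Ψ⁻¹ * Λ₂' with hD'def
  obtain ⟨hDdiag, hDanti, hDpos⟩ := hIC
  obtain ⟨hD'diag, hD'anti, hD'pos⟩ := hIC'
  have hB12D : B₁₂ * D' = 0 := by
    rw [hD'def, ← Matrix.mul_assoc, ← Matrix.mul_assoc, hB12L, Matrix.zero_mul, Matrix.zero_mul]
  have hB12 : B₁₂ = 0 := by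
    ext a b
    have h1 := congrFun (congrFun hB12D a) b
    rw [Matrix.mul_apply] at h1
    have h2 : ∑ c, B₁₂ a c * D' c b = B₁₂ a b * D' b b :=
      Finset.sum_eq_single b (fun c _ hc => by rw [hD'diag hc, mul_zero]) (by simp)
    rw [h2] at h1
    have h3 : (0:ℝ) = (0 : Matrix (Fin k₁) (Fin k₂) ℝ) a b := rfl
    rw [← h3] at h1
    simpa using (mul_eq_zero.mp h1).resolve_right (hD'pos b).ne'
  -- orthogonality relations between the blocks
  have hmulAtA : fromBlocks (B₁₁ᵀ * B₁₁ + B₂₁ᵀ * B₂₁) (B₁₁ᵀ * B₁₂ + B₂₁ᵀ * B₂₂)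
      (B₁₂ᵀ * B₁₁ + B₂₂ᵀ * B₂₁) (B₁₂ᵀ * B₁₂ + B₂₂ᵀ * B₂₂)
      = fromBlocks (1 : Matrix (Fin k₁) (Fin k₁) ℝ) 0 0 (1 : Matrix (Fin k₂) (Fin k₂) ℝ) := by
    rw [← Matrix.fromBlocks_multiply, ← Matrix.fromBlocks_transpose, ← hAblocks, hAtA,
      Matrix.fromBlocks_one]
  obtain ⟨e11, e12, e21, e22⟩ := Matrix.fromBlocks_inj.mp hmulAtA
  have hB22o : B₂₂ᵀ * B₂₂ = 1 := by
    rw [hB12, Matrix.transpose_zero, Matrix.zero_mul, zero_add] at e22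
    exact e22
  have hmulAAt : fromBlocks (B₁₁ * B₁₁ᵀ + B₁₂ * B₁₂ᵀ) (B₁₁ * B₂₁ᵀ + B₁₂ * B₂₂ᵀ)
      (B₂₁ * B₁₁ᵀ + B₂₂ * B₁₂ᵀ) (B₂₁ * B₂₁ᵀ + B₂₂ * B₂₂ᵀ)
      = fromBlocks (1 : Matrix (Fin k₁) (Fin k₁) ℝ) 0 0 (1 : Matrix (Fin k₂) (Fin k₂) ℝ) := by
    rw [← Matrix.fromBlocks_multiply, ← Matrix.fromBlocks_transpose, ← hAblocks, hAAt,
      Matrix.fromBlocks_one]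
  obtain ⟨f11, f12, f21, f22⟩ := Matrix.fromBlocks_inj.mp hmulAAt
  have hB11o : B₁₁ * B₁₁ᵀ = 1 := by
    rw [hB12, Matrix.zero_mul, add_zero] at f11
    exact f11
  have hB21 : B₂₁ = 0 := by
    have h1 : B₂₁ * B₁₁ᵀ = 0 := by
      rw [hB12, Matrix.transpose_zero, Matrix.mul_zero, add_zero] at f21
      exact f21
    calc B₂₁ = B₂₁ * (B₁₁ᵀ * B₁₁) := by
          rw [mul_eq_one_comm.mp hB11o, Matrix.mul_one]
      _ = (B₂₁ * B₁₁ᵀ) * B₁₁ := by rw [Matrix.mul_assoc]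
      _ = 0 := by rw [h1, Matrix.zero_mul]
  -- column blocks of Z₁₂'
  have hZcols : Z₁₂' = fromCols (Z₁ * B₁₁ + Z₂ * B₂₁) (Z₁ * B₁₂ + Z₂ * B₂₂) := by
    rw [hZA, hZ₁₂, hAblocks, fromCols_mul_fromBlocks]
  have hZ2' : Z₂' = Z₂ * B₂₂ := by
    calc Z₂' = toCols₂ (fromCols Z₁' Z₂') := by simp
      _ = toCols₂ Z₁₂' := by rw [← hZ₁₂']
      _ = Z₁ * B₁₂ + Z₂ * B₂₂ := by rw [hZcols]; simp
      _ = Z₂ * B₂₂ := by rw [hB12, Matrix.mul_zero, zero_add]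
  have hZ1' : Z₁' = Z₁ * B₁₁ := by
    calc Z₁' = toCols₁ (fromCols Z₁' Z₂') := by simp
      _ = toCols₁ Z₁₂' := by rw [← hZ₁₂']
      _ = Z₁ * B₁₁ + Z₂ * B₂₁ := by rw [hZcols]; simp
      _ = Z₁ * B₁₁ := by rw [hB21, Matrix.mul_zero, add_zero]
  -- D = B₂₂ D' B₂₂ᵀ and the permutation argument
  have hLam' : Λ₂ = Λ₂' * B₂₂ᵀ := by
    have h := congrArg Matrix.transpose hLam
    simpa [Matrix.transpose_mul] using h
  have hDeq : D = B₂₂ * D' * B₂₂ᵀ := by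
    rw [hDdef, hD'def, hLam, hLam']
    simp only [Matrix.mul_assoc]
  have hcomm : D * B₂₂ = B₂₂ * D' := by
    rw [hDeq, Matrix.mul_assoc (B₂₂ * D'), hB22o, Matrix.mul_one]
  have hentry : ∀ i j, D i i * B₂₂ i j = B₂₂ i j * D' j j := by
    intro i j
    have h1 := congrFun (congrFun hcomm i) j
    rw [Matrix.mul_apply, Matrix.mul_apply] at h1
    have hL : ∑ c, D i c * B₂₂ c j = D i i * B₂₂ i j :=
      Finset.sum_eq_single i (fun c _ hc => by rw [hDdiag (Ne.symm hc), zero_mul]) (by simp)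
    have hR : ∑ c, B₂₂ i c * D' c j = B₂₂ i j * D' j j :=
      Finset.sum_eq_single j (fun c _ hc => by rw [hD'diag hc, mul_zero]) (by simp)
    rw [hL, hR] at h1
    exact h1
  have hexcol : ∀ j : Fin k₂, ∃ i, B₂₂ i j ≠ 0 := by
    intro j
    by_contra hcon
    push_neg at hcon
    have h1 := congrFun (congrFun hB22o j) j
    rw [Matrix.mul_apply] at h1
    simp [Matrix.transpose_apply, hcon, Matrix.one_apply] at h1
  choose σ hσ using hexcol
  have hval : ∀ j, D (σ j) (σ j) = D' j j := by
    intro j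
    have h1 := hentry (σ j) j
    rw [mul_comm (B₂₂ (σ j) j) (D' j j)] at h1
    exact mul_right_cancel₀ (hσ j) h1
  have huniq : ∀ i j, B₂₂ i j ≠ 0 → i = σ j := by
    intro i j hij
    have h1 := hentry i j
    rw [mul_comm (B₂₂ i j) (D' j j)] at h1
    have h2 : D i i = D' j j := mul_right_cancel₀ hij h1
    have h3 : D i i = D (σ j) (σ j) := by rw [h2, hval j]
    exact hDanti.injective h3
  have hσinj : Function.Injective σ := by
    intro j j' h
    have h1 : D' j j = D' j' j' := by rw [← hval j, h, hval j']
    exact hD'anti.injective h1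
  have hσmono : StrictMono σ := by
    intro j j' hlt
    have h1 : D' j' j' < D' j j := hD'anti hlt
    rw [← hval j, ← hval j'] at h1
    exact hDanti.lt_iff_gt.mp h1
  have hσid : σ = id := strictMono_surj_fin_eq_id hσmono (Finite.surjective_of_injective hσinj)
  have hB22offdiag : ∀ i j, i ≠ j → B₂₂ i j = 0 := by
    intro i j hne
    by_contra h0
    have h1 := huniq i j h0
    rw [hσid] at h1
    exact hne h1
  have hB22diag_sq : ∀ j, B₂₂ j j * B₂₂ j j = 1 := by
    intro j
    have h1 := congrFun (congrFun hB22o j) j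
    rw [Matrix.mul_apply] at h1
    have h2 : ∑ c, B₂₂ᵀ j c * B₂₂ c j = B₂₂ᵀ j j * B₂₂ j j :=
      Finset.sum_eq_single j
        (fun c _ hc => by rw [Matrix.transpose_apply, hB22offdiag c j hc, zero_mul]) (by simp)
    rw [h2] at h1
    simpa [Matrix.one_apply] using h1
  -- sign convention forces B₂₂ = 1
  have hZ2col : ∀ i j, Z₂' i j = Z₂ i j * B₂₂ j j := by
    intro i j
    have h1 := congrFun (congrFun hZ2' i) j
    rw [Matrix.mul_apply] at h1
    have h2 : ∑ c, Z₂ i c * B₂₂ c j = Z₂ i j * B₂₂ j j :=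
      Finset.sum_eq_single j (fun c _ hc => by rw [hB22offdiag c j hc, mul_zero]) (by simp)
    rw [h2] at h1
    exact h1
  have hcolZ2 : ∀ j, ∃ i, Z₂ i j ≠ 0 := by
    intro j
    obtain ⟨i, hi⟩ := exists_col_entry_ne_zero_of_cancel hcanf (Sum.inl (Sum.inr j))
    refine ⟨i, ?_⟩
    simpa [hZf, hZ₁₂] using hi
  have hB22pos : ∀ j, B₂₂ j j = 1 := by
    intro j
    obtain ⟨i1, hi1⟩ := hcolZ2 j
    set T : Finset (Fin n) := Finset.univ.filter (fun i => Z₂ i j ≠ 0) with hT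
    have hTne : T.Nonempty := ⟨i1, by simp [hT, hi1]⟩
    set i₀ := T.min' hTne with hi₀
    have hi₀mem : i₀ ∈ T := T.min'_mem hTne
    have hi₀ne : Z₂ i₀ j ≠ 0 := by simpa [hT] using hi₀mem
    have hzero : ∀ i', i' < i₀ → Z₂ i' j = 0 := by
      intro i' hlt
      by_contra h0
      have hmem : i' ∈ T := by simp [hT, h0]
      exact absurd (T.min'_le i' hmem) (not_le.mpr hlt)
    have hp1 : 0 < Z₂ i₀ j := by
      have h := hsign (Sum.inl (Sum.inr j)) i₀
        (fun i' hlt => by simpa [hZf, hZ₁₂] using hzero i' hlt)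
        (by simpa [hZf, hZ₁₂] using hi₀ne)
      simpa [hZf, hZ₁₂] using h
    have hBne : B₂₂ j j ≠ 0 := by
      intro h0
      have := hB22diag_sq j
      rw [h0, mul_zero] at this
      exact zero_ne_one this
    have hp2 : 0 < Z₂ i₀ j * B₂₂ j j := by
      have h := hsign' (Sum.inl (Sum.inr j)) i₀
        (fun i' hlt => by
          have hv : Zf' i' (Sum.inl (Sum.inr j)) = Z₂ i' j * B₂₂ j j := by
            simp [hZf', hZ₁₂', hZ2col]
          rw [hv, hzero i' hlt, zero_mul])
        (by
          have hv : Zf' i₀ (Sum.inl (Sum.inr j)) = Z₂ i₀ j * B₂₂ j j := by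
            simp [hZf', hZ₁₂', hZ2col]
          rw [hv]
          exact mul_ne_zero hi₀ne hBne)
      have hv : Zf' i₀ (Sum.inl (Sum.inr j)) = Z₂ i₀ j * B₂₂ j j := by
        simp [hZf', hZ₁₂', hZ2col]
      rwa [hv] at h
    have hBpos : 0 < B₂₂ j j := by
      by_contra hh
      push_neg at hh
      have h2 : Z₂ i₀ j * B₂₂ j j ≤ 0 := mul_nonpos_of_nonneg_of_nonpos hp1.le hh
      exact absurd hp2 (not_lt.mpr h2)
    rcases mul_self_eq_one_iff.mp (hB22diag_sq j) with h | h
    · exact h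
    · exfalso; rw [h] at hBpos; linarith
  have hB22id : B₂₂ = 1 := by
    ext i j
    by_cases hij : i = j
    · subst hij; rw [hB22pos i, Matrix.one_apply_eq]
    · rw [hB22offdiag i j hij, Matrix.one_apply_ne hij]
  have hZ2eq : Z₂ = Z₂' := by rw [hZ2', hB22id, Matrix.mul_one]
  have hΛ2 : Λ₂ = Λ₂' := by
    have h := hLam
    rw [hB22id, Matrix.one_mul] at h
    have h2 := congrArg Matrix.transpose h
    simpa using h2
  have hZ1Z1 : Z₁ * Z₁ᵀ = Z₁' * Z₁'ᵀ := by
    rw [hZ1', Matrix.transpose_mul]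
    rw [show Z₁ * B₁₁ * (B₁₁ᵀ * Z₁ᵀ) = Z₁ * ((B₁₁ * B₁₁ᵀ) * Z₁ᵀ) by
      simp only [Matrix.mul_assoc], hB11o, Matrix.one_mul]
  exact ⟨hα, hμ, hZ2eq, hZ3, hΛ2, hΛ3, hZ1Z1, B₁₁, hB11o, hZ1'⟩
end

section
/- (Corollary 1, condition set (2).) Let n, p ≥ 1 and k = k₁ + k₂ + k₃. Let Z = [Z₁ Z₂ Z₃] ∈ ℝ^{n×k} and Z* = [Z₁* Z₂* Z₃*] ∈ ℝ^{n×k} (blocks of column dimensions k₁, k₂, k₃) be centered; write Z₁₂ = [Z₁ Z₂] and Z₁₂* = [Z₁* Z₂*]. Let α, α* ∈ ℝ^n; μ, μ* ∈ ℝ^p; Λ₂, Λ₂* ∈ ℝ^{p×k₂}; Λ₃, Λ₃* ∈ ℝ^{p×k₃}; and let Ψ ∈ ℝ^{p×p} be diagonal with strictly positive diagonal entries. Assume: (i) α 1_nᵀ + 1_n αᵀ + Z₁₂ Z₁₂ᵀ = α* 1_nᵀ + 1_n α*ᵀ + Z₁₂* Z₁₂*ᵀ; (ii) 1_n μᵀ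 + Z₂ Λ₂ᵀ + Z₃ Λ₃ᵀ = 1_n μ*ᵀ + Z₂* Λ₂*ᵀ + Z₃* Λ₃*ᵀ; (iii) Zᵀ Z and Z*ᵀ Z* are diagonal with strictly decreasing, strictly positive diagonal entries; (iv) Λ₃ᵀ Ψ^{-1} Λ₃ = p·I_{k₃} and Λ₃*ᵀ Ψ^{-1} Λ₃* = p·I_{k₃}; (v) Z and Z* satisfy the positive-first-entry convention. Then α = α*, μ = μ*, Z = Z* (in particular Z₁ = Z₁*, Z₂ = Z₂*, Z₃ = Z₃*), Λ₂ = Λ₂*, and Λ₃ = Λ₃*. -/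
open Matrix

/-- The order-preserving identification of the block column index
`(Fin k₁ ⊕ Fin k₂) ⊕ Fin k₃` with `Fin (k₁ + k₂ + k₃)`. -/
def blockEquiv (k₁ k₂ k₃ : ℕ) : ((Fin k₁ ⊕ Fin k₂) ⊕ Fin k₃) ≃ Fin (k₁ + k₂ + k₃) :=
  (Equiv.sumCongr finSumFinEquiv (Equiv.refl (Fin k₃))).trans finSumFinEquiv

lemma fin_strictMono_surj_eq {k : ℕ} (f : Fin k → Fin k) (hm : StrictMono f)
    (hs : Function.Surjective f) : ∀ x, f x = x := by
  intro x
  have h1 := StrictMono.coe_orderIsoOfSurjective f hm hs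
  have h2 : StrictMono.orderIsoOfSurjective f hm hs = OrderIso.refl (Fin k) :=
    Subsingleton.elim _ _
  calc f x = (StrictMono.orderIsoOfSurjective f hm hs) x := by rw [h1]
    _ = x := by rw [h2]; rfl

lemma sign_core {n k : ℕ} (Z Z' : Matrix (Fin n) (Fin k) ℝ) (d d' : Fin k → ℝ)
    (hZ : Zᵀ * Z = Matrix.diagonal d) (hZ' : Z'ᵀ * Z' = Matrix.diagonal d')
    (hd : StrictAnti d) (hd' : StrictAnti d')
    (hdpos : ∀ j, 0 < d j) (hd'pos : ∀ j, 0 < d' j)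
    (hG : Z * Zᵀ = Z' * Z'ᵀ)
    (hs : PosFirstEntry Z) (hs' : PosFirstEntry Z') : Z' = Z := by
  classical
  set B := Z'ᵀ * Z with hB
  have hint : Matrix.diagonal d' * B = B * Matrix.diagonal d := by
    rw [hB, ← hZ', ← hZ]
    calc Z'ᵀ * Z' * (Z'ᵀ * Z) = Z'ᵀ * (Z' * Z'ᵀ * Z) := by simp only [Matrix.mul_assoc]
      _ = Z'ᵀ * (Z * Zᵀ * Z) := by rw [hG]
      _ = Z'ᵀ * Z * (Zᵀ * Z) := by simp only [Matrix.mul_assoc]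
  have hintE : ∀ i j, d' i * B i j = B i j * d j := by
    intro i j
    have h := Matrix.ext_iff.mpr hint i j
    rwa [Matrix.diagonal_mul, Matrix.mul_diagonal] at h
  have hBtB : Bᵀ * B = Matrix.diagonal (fun j => d j * d j) := by
    rw [hB, Matrix.transpose_mul, Matrix.transpose_transpose]
    calc Zᵀ * Z' * (Z'ᵀ * Z) = Zᵀ * (Z' * Z'ᵀ * Z) := by simp only [Matrix.mul_assoc]
      _ = Zᵀ * (Z * Zᵀ * Z) := by rw [hG]
      _ = (Zᵀ * Z) * (Zᵀ * Z) := by simp only [Matrix.mul_assoc]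
      _ = _ := by rw [hZ, Matrix.diagonal_mul_diagonal]
  have hcolsum : ∀ j, (∑ i, B i j * B i j) = d j * d j := by
    intro j
    have h := Matrix.ext_iff.mpr hBtB j j
    rw [Matrix.mul_apply, Matrix.diagonal_apply_eq] at h
    simpa [Matrix.transpose_apply] using h
  have hcol : ∀ j, ∃ i, B i j ≠ 0 := by
    intro j
    by_contra h
    push_neg at h
    have h0 : (∑ i, B i j * B i j) = 0 := by
      apply Finset.sum_eq_zero; intro i _; rw [h i]; ring
    rw [hcolsum j] at h0
    exact (mul_pos (hdpos j) (hdpos j)).ne' h0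
  have hne : ∀ i j, B i j ≠ 0 → d' i = d j := by
    intro i j hij
    have h := hintE i j
    rw [mul_comm (B i j) (d j)] at h
    exact mul_right_cancel₀ hij h
  choose f hf using hcol
  have hdf : ∀ j, d' (f j) = d j := fun j => hne _ _ (hf j)
  have hm : StrictMono f := by
    intro a b hab
    have h : d' (f b) < d' (f a) := by rw [hdf, hdf]; exact hd hab
    exact (hd'.lt_iff_gt).mp h
  have hsurj : Function.Surjective f := Finite.surjective_of_injective hm.injective
  have hdd : ∀ j, d' j = d j := by
    intro j
    have h := hdf j
    rwa [fin_strictMono_surj_eq f hm hsurj j] at h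
  have hBdiag : ∀ i j, i ≠ j → B i j = 0 := by
    intro i j hij
    by_contra hB0
    have h1 : d' i = d' j := by rw [hne i j hB0, ← hdd j]
    exact hij (hd'.injective h1)
  have hBjj : ∀ j, B j j * B j j = d j * d j := by
    intro j
    have h := hcolsum j
    rwa [Finset.sum_eq_single j (fun b _ hb => by rw [hBdiag b j hb]; ring)
      (fun hj => absurd (Finset.mem_univ j) hj)] at h
  have hZB : Z' * B = Z * Matrix.diagonal d := by
    rw [hB, ← hZ]
    calc Z' * (Z'ᵀ * Z) = Z' * Z'ᵀ * Z := by simp only [Matrix.mul_assoc]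
      _ = Z * Zᵀ * Z := by rw [hG]
      _ = Z * (Zᵀ * Z) := by simp only [Matrix.mul_assoc]
  have hZBe : ∀ i j, Z' i j * B j j = Z i j * d j := by
    intro i j
    have h := Matrix.ext_iff.mpr hZB i j
    rw [Matrix.mul_diagonal, Matrix.mul_apply,
      Finset.sum_eq_single j (fun b _ hb => by rw [hBdiag b j hb]; ring)
      (fun hj => absurd (Finset.mem_univ j) hj)] at h
    exact h
  have hcolZ : ∀ j, ∃ i, Z i j ≠ 0 := by
    intro j
    by_contra h
    push_neg at h
    have h0 := Matrix.ext_iff.mpr hZ j j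
    rw [Matrix.mul_apply, Matrix.diagonal_apply_eq] at h0
    have h1 : (∑ i, Zᵀ j i * Z i j) = 0 := by
      apply Finset.sum_eq_zero; intro i _
      rw [Matrix.transpose_apply, h i]; ring
    rw [h1] at h0
    exact (hdpos j).ne' h0.symm
  ext i j
  rcases mul_self_eq_mul_self_iff.mp (hBjj j) with hpos | hneg
  · have h := hZBe i j
    rw [hpos] at h
    exact mul_right_cancel₀ (hdpos j).ne' h
  · exfalso
    obtain ⟨i0, hi0⟩ := hcolZ j
    set S := Finset.univ.filter (fun i => Z i j ≠ 0) with hS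
    have hSne : S.Nonempty := ⟨i0, by simp [hS, hi0]⟩
    set m := S.min' hSne with hm'
    have hmS : Z m j ≠ 0 := by
      have h := S.min'_mem hSne
      simp only [hS, Finset.mem_filter] at h
      exact h.2
    have hbefore : ∀ i', i' < m → Z i' j = 0 := by
      intro i' hi'
      by_contra hz
      have h : m ≤ i' := S.min'_le i' (by simp [hS, hz])
      exact absurd hi' (not_lt.mpr h)
    have hZpos : 0 < Z m j := hs j m hbefore hmS
    have hd0 : d j ≠ 0 := (hdpos j).ne'
    have hZ'eq : ∀ i, Z' i j = - Z i j := by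
      intro i
      have h := hZBe i j
      rw [hneg] at h
      have h2 : (-(Z' i j)) * d j = Z i j * d j := by rw [neg_mul, ← mul_neg]; exact h
      have h3 := mul_right_cancel₀ hd0 h2
      linarith
    have hbefore' : ∀ i', i' < m → Z' i' j = 0 := fun i' h' => by
      rw [hZ'eq, hbefore i' h', neg_zero]
    have hne'' : Z' m j ≠ 0 := by rw [hZ'eq]; simpa using hmS
    have h := hs' j m hbefore' hne''
    rw [hZ'eq] at h
    linarith


lemma submatrix_mul_transpose_self {n K : ℕ} {κ : Type*} [Fintype κ]
    (M : Matrix (Fin n) κ ℝ) (e : Fin K ≃ κ) :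
    (M.submatrix id e) * (M.submatrix id e)ᵀ = M * Mᵀ := by
  ext i i'
  simp only [Matrix.mul_apply, Matrix.submatrix_apply, Matrix.transpose_apply, id_eq]
  exact Equiv.sum_comp e (fun l => M i l * M i' l)

lemma diagonal_mul_cancel {κ : Type*} {ι : Type*} [Fintype κ] [DecidableEq κ]
    (v : κ → ℝ) (hv : ∀ i, v i ≠ 0) (M N : Matrix κ ι ℝ)
    (h : Matrix.diagonal v * M = Matrix.diagonal v * N) : M = N := by
  ext i j
  have h2 := Matrix.ext_iff.mpr h i j
  rw [Matrix.diagonal_mul, Matrix.diagonal_mul] at h2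
  exact mul_left_cancel₀ (hv i) h2

lemma IC_facts {n k₁ k₂ k₃ : ℕ}
    (Z₁₂ : Matrix (Fin n) (Fin k₁ ⊕ Fin k₂) ℝ) (Z₃ : Matrix (Fin n) (Fin k₃) ℝ)
    (Zf : Matrix (Fin n) ((Fin k₁ ⊕ Fin k₂) ⊕ Fin k₃) ℝ)
    (hZf : Zf = fromCols Z₁₂ Z₃)
    (hIC : ((reindex (blockEquiv k₁ k₂ k₃) (blockEquiv k₁ k₂ k₃)) (Zfᵀ * Zf)).IsDiag
      ∧ (StrictAnti fun i =>
            ((reindex (blockEquiv k₁ k₂ k₃) (blockEquiv k₁ k₂ k₃)) (Zfᵀ * Zf)) i i)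
      ∧ ∀ i, 0 < ((reindex (blockEquiv k₁ k₂ k₃) (blockEquiv k₁ k₂ k₃)) (Zfᵀ * Zf)) i i)
    (hsign : PosFirstEntry Zf) :
    ∃ (dW : Fin (k₁ + k₂) → ℝ) (d₃ : Fin k₃ → ℝ),
      ((Z₁₂.submatrix id ⇑finSumFinEquiv.symm)ᵀ * (Z₁₂.submatrix id ⇑finSumFinEquiv.symm)
          = Matrix.diagonal dW)
      ∧ StrictAnti dW ∧ (∀ c, 0 < dW c)
      ∧ PosFirstEntry (Z₁₂.submatrix id ⇑finSumFinEquiv.symm)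
      ∧ (Z₃ᵀ * Z₃ = Matrix.diagonal d₃)
      ∧ StrictAnti d₃ ∧ (∀ c, 0 < d₃ c)
      ∧ PosFirstEntry Z₃
      ∧ (Z₁₂ᵀ * Z₃ = 0) := by
  classical
  obtain ⟨hdiag, hanti, hpos⟩ := hIC
  set e := blockEquiv k₁ k₂ k₃ with he
  set R := (reindex e e) (Zfᵀ * Zf) with hR
  set d : Fin (k₁ + k₂ + k₃) → ℝ := fun i => R i i with hd
  have hRab : ∀ a b, (Zfᵀ * Zf) a b = R (e a) (e b) := by
    intro a b
    rw [hR]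
    simp [Matrix.reindex_apply]
  have hsum : ∀ a b, (Zfᵀ * Zf) a b = ∑ i, Zf i a * Zf i b := by
    intro a b
    simp [Matrix.mul_apply, Matrix.transpose_apply]
  have horth : ∀ a b, a ≠ b → (∑ i, Zf i a * Zf i b) = 0 := by
    intro a b hab
    rw [← hsum, hRab]
    exact hdiag (fun h => hab (e.injective h))
  have hdval : ∀ a, (∑ i, Zf i a * Zf i a) = d (e a) := by
    intro a
    rw [← hsum, hRab a a]
  have heinl : ∀ x : Fin k₁ ⊕ Fin k₂, e (Sum.inl x) = Fin.castAdd k₃ (finSumFinEquiv x) := by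
    intro x
    simp [he, blockEquiv]
  have heinr : ∀ y : Fin k₃, e (Sum.inr y) = Fin.natAdd (k₁ + k₂) y := by
    intro y
    simp [he, blockEquiv]
  have hZfl : ∀ i c, Zf i (Sum.inl c) = Z₁₂ i c := by
    intro i c; rw [hZf]; simp
  have hZfr : ∀ i b, Zf i (Sum.inr b) = Z₃ i b := by
    intro i b; rw [hZf]; simp
  refine ⟨fun c => d (Fin.castAdd k₃ c), fun b => d (Fin.natAdd (k₁ + k₂) b),
    ?_, ?_, ?_, ?_, ?_, ?_, ?_, ?_, ?_⟩
  · ext c c'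
    rw [Matrix.mul_apply]
    simp only [Matrix.transpose_apply, Matrix.submatrix_apply, id_eq]
    by_cases hcc : c = c'
    · subst hcc
      rw [Matrix.diagonal_apply_eq]
      have h := hdval (Sum.inl (finSumFinEquiv.symm c))
      rw [heinl, Equiv.apply_symm_apply] at h
      rw [← h]
      exact Finset.sum_congr rfl (fun i _ => by rw [hZfl])
    · rw [Matrix.diagonal_apply_ne _ hcc]
      have h := horth (Sum.inl (finSumFinEquiv.symm c)) (Sum.inl (finSumFinEquiv.symm c'))
        (fun hh => hcc (by
          have := Sum.inl.inj hh
          exact finSumFinEquiv.symm.injective this))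
      rw [← h]
      exact Finset.sum_congr rfl (fun i _ => by rw [hZfl, hZfl])
  · intro a b hab
    apply hanti
    rw [Fin.lt_def, Fin.coe_castAdd, Fin.coe_castAdd]
    exact hab
  · intro c; exact hpos _
  · intro c i hbef hne
    have h0 : ∀ i' : Fin n, i' < i → Zf i' (Sum.inl (finSumFinEquiv.symm c)) = 0 := by
      intro i' hi'
      rw [hZfl]
      have := hbef i' hi'
      simpa [Matrix.submatrix_apply] using this
    have h1 : Zf i (Sum.inl (finSumFinEquiv.symm c)) ≠ 0 := by
      rw [hZfl]
      simpa [Matrix.submatrix_apply] using hne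
    have := hsign (Sum.inl (finSumFinEquiv.symm c)) i h0 h1
    rw [hZfl] at this
    simpa [Matrix.submatrix_apply] using this
  · ext b b'
    rw [Matrix.mul_apply]
    simp only [Matrix.transpose_apply]
    by_cases hbb : b = b'
    · subst hbb
      rw [Matrix.diagonal_apply_eq]
      have h := hdval (Sum.inr b)
      rw [heinr] at h
      rw [← h]
      exact Finset.sum_congr rfl (fun i _ => by rw [hZfr])
    · rw [Matrix.diagonal_apply_ne _ hbb]
      have h := horth (Sum.inr b) (Sum.inr b') (fun hh => hbb (Sum.inr.inj hh))
      rw [← h]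
      exact Finset.sum_congr rfl (fun i _ => by rw [hZfr, hZfr])
  · intro a b hab
    apply hanti
    rw [Fin.lt_def, Fin.coe_natAdd, Fin.coe_natAdd]
    exact Nat.add_lt_add_left hab _
  · intro c; exact hpos _
  · intro b i hbef hne
    have h0 : ∀ i' : Fin n, i' < i → Zf i' (Sum.inr b) = 0 := by
      intro i' hi'
      rw [hZfr]
      exact hbef i' hi'
    have h1 : Zf i (Sum.inr b) ≠ 0 := by rw [hZfr]; exact hne
    have := hsign (Sum.inr b) i h0 h1
    rwa [hZfr] at this
  · ext a b
    rw [Matrix.mul_apply]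
    simp only [Matrix.transpose_apply, Matrix.zero_apply]
    have h := horth (Sum.inl a) (Sum.inr b) (by simp)
    rw [← h]
    exact Finset.sum_congr rfl (fun i _ => by rw [hZfl, hZfr])

/-- Corollary 1 of the paper, condition set (2): `Zᵀ Z` diagonal with strictly decreasing,
strictly positive diagonal entries and `Λ₃ᵀ Ψ⁻¹ Λ₃ = p I`. -/
theorem identifiability_general_IC2
    (n p k₁ k₂ k₃ : ℕ) (hn : 1 ≤ n) (hp : 1 ≤ p)
    (Z₁ Z₁' : Matrix (Fin n) (Fin k₁) ℝ)
    (Z₂ Z₂' : Matrix (Fin n) (Fin k₂) ℝ)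
    (Z₃ Z₃' : Matrix (Fin n) (Fin k₃) ℝ)
    (α α' : Matrix (Fin n) (Fin 1) ℝ)
    (μ μ' : Matrix (Fin p) (Fin 1) ℝ)
    (Λ₂ Λ₂' : Matrix (Fin p) (Fin k₂) ℝ)
    (Λ₃ Λ₃' : Matrix (Fin p) (Fin k₃) ℝ)
    (Ψ : Matrix (Fin p) (Fin p) ℝ)
    (hΨdiag : Ψ.IsDiag) (hΨpos : ∀ j, 0 < Ψ j j)
    (Z₁₂ Z₁₂' : Matrix (Fin n) (Fin k₁ ⊕ Fin k₂) ℝ)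
    (hZ₁₂ : Z₁₂ = fromCols Z₁ Z₂) (hZ₁₂' : Z₁₂' = fromCols Z₁' Z₂')
    (Zf Zf' : Matrix (Fin n) ((Fin k₁ ⊕ Fin k₂) ⊕ Fin k₃) ℝ)
    (hZf : Zf = fromCols Z₁₂ Z₃) (hZf' : Zf' = fromCols Z₁₂' Z₃')
    -- centered
    (hc : (onesCol n)ᵀ * Zf = 0) (hc' : (onesCol n)ᵀ * Zf' = 0)
    -- (i) equal network probability matrices
    (hnet : α * (onesCol n)ᵀ + onesCol n * αᵀ + Z₁₂ * Z₁₂ᵀ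
          = α' * (onesCol n)ᵀ + onesCol n * α'ᵀ + Z₁₂' * Z₁₂'ᵀ)
    -- (ii) equal mean matrices
    (hmean : onesCol n * μᵀ + Z₂ * Λ₂ᵀ + Z₃ * Λ₃ᵀ
           = onesCol n * μ'ᵀ + Z₂' * Λ₂'ᵀ + Z₃' * Λ₃'ᵀ)
    -- (iii) Zᵀ Z diagonal with strictly decreasing, strictly positive entries
    (hIC : ((reindex (blockEquiv k₁ k₂ k₃) (blockEquiv k₁ k₂ k₃)) (Zfᵀ * Zf)).IsDiag
      ∧ (StrictAnti fun i =>
            ((reindex (blockEquiv k₁ k₂ k₃) (blockEquiv k₁ k₂ k₃)) (Zfᵀ * Zf)) i i)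
      ∧ ∀ i, 0 < ((reindex (blockEquiv k₁ k₂ k₃) (blockEquiv k₁ k₂ k₃)) (Zfᵀ * Zf)) i i)
    (hIC' : ((reindex (blockEquiv k₁ k₂ k₃) (blockEquiv k₁ k₂ k₃)) (Zf'ᵀ * Zf')).IsDiag
      ∧ (StrictAnti fun i =>
            ((reindex (blockEquiv k₁ k₂ k₃) (blockEquiv k₁ k₂ k₃)) (Zf'ᵀ * Zf')) i i)
      ∧ ∀ i, 0 < ((reindex (blockEquiv k₁ k₂ k₃) (blockEquiv k₁ k₂ k₃)) (Zf'ᵀ * Zf')) i i)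
    -- (iv) Λ₃ᵀ Ψ⁻¹ Λ₃ = p I
    (hIC₃ : Λ₃ᵀ * Ψ⁻¹ * Λ₃ = (p : ℝ) • 1)
    (hIC₃' : Λ₃'ᵀ * Ψ⁻¹ * Λ₃' = (p : ℝ) • 1)
    -- (v) sign convention
    (hsign : PosFirstEntry Zf) (hsign' : PosFirstEntry Zf') :
    α = α' ∧ μ = μ' ∧ Z₁ = Z₁' ∧ Z₂ = Z₂' ∧ Z₃ = Z₃' ∧ Λ₂ = Λ₂' ∧ Λ₃ = Λ₃' := by
  classical
  have hn0 : (n : ℝ) ≠ 0 := by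
    have : (0:ℝ) < (n:ℝ) := by exact_mod_cast hn
    exact this.ne'
  have hZfl : ∀ i c, Zf i (Sum.inl c) = Z₁₂ i c := fun i c => by rw [hZf]; simp
  have hZfr : ∀ i b, Zf i (Sum.inr b) = Z₃ i b := fun i b => by rw [hZf]; simp
  have hZ12l : ∀ i a, Z₁₂ i (Sum.inl a) = Z₁ i a := fun i a => by rw [hZ₁₂]; simp
  have hZ12r : ∀ i a, Z₁₂ i (Sum.inr a) = Z₂ i a := fun i a => by rw [hZ₁₂]; simp
  have hZ12l' : ∀ i a, Z₁₂' i (Sum.inl a) = Z₁' i a := fun i a => by rw [hZ₁₂']; simp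
  have hZ12r' : ∀ i a, Z₁₂' i (Sum.inr a) = Z₂' i a := fun i a => by rw [hZ₁₂']; simp
  -- column sums are zero
  have hcs : ∀ j, (∑ i, Zf i j) = 0 := by
    intro j
    have h := Matrix.ext_iff.mpr hc 0 j
    simpa [Matrix.mul_apply, Matrix.transpose_apply, onesCol] using h
  have hcs' : ∀ j, (∑ i, Zf' i j) = 0 := by
    intro j
    have h := Matrix.ext_iff.mpr hc' 0 j
    simpa [Matrix.mul_apply, Matrix.transpose_apply, onesCol] using h
  have hcsZ₁₂ : ∀ c, (∑ i, Z₁₂ i c) = 0 := by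
    intro c
    rw [show (∑ i, Z₁₂ i c) = ∑ i, Zf i (Sum.inl c) from
      Finset.sum_congr rfl fun i _ => (hZfl i c).symm]
    exact hcs _
  have hcsZ₁₂' : ∀ c, (∑ i, Z₁₂' i c) = 0 := by
    intro c
    rw [show (∑ i, Z₁₂' i c) = ∑ i, Zf' i (Sum.inl c) from
      Finset.sum_congr rfl fun i _ => by rw [hZf']; simp]
    exact hcs' _
  have hcsZ₂ : ∀ a, (∑ i, Z₂ i a) = 0 := by
    intro a
    rw [show (∑ i, Z₂ i a) = ∑ i, Z₁₂ i (Sum.inr a) from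
      Finset.sum_congr rfl fun i _ => (hZ12r i a).symm]
    exact hcsZ₁₂ _
  have hcsZ₂' : ∀ a, (∑ i, Z₂' i a) = 0 := by
    intro a
    rw [show (∑ i, Z₂' i a) = ∑ i, Z₁₂' i (Sum.inr a) from
      Finset.sum_congr rfl fun i _ => (hZ12r' i a).symm]
    exact hcsZ₁₂' _
  have hcsZ₃ : ∀ b, (∑ i, Z₃ i b) = 0 := by
    intro b
    rw [show (∑ i, Z₃ i b) = ∑ i, Zf i (Sum.inr b) from
      Finset.sum_congr rfl fun i _ => (hZfr i b).symm]
    exact hcs _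
  have hcsZ₃' : ∀ b, (∑ i, Z₃' i b) = 0 := by
    intro b
    rw [show (∑ i, Z₃' i b) = ∑ i, Zf' i (Sum.inr b) from
      Finset.sum_congr rfl fun i _ => by rw [hZf']; simp]
    exact hcs' _
  -- Step 1: α = α'
  have eq1 : ∀ i j, α i 0 + α j 0 + (∑ l, Z₁₂ i l * Z₁₂ j l)
      = α' i 0 + α' j 0 + (∑ l, Z₁₂' i l * Z₁₂' j l) := by
    intro i j
    have h := Matrix.ext_iff.mpr hnet i j
    simp only [Matrix.add_apply, Matrix.mul_apply, Matrix.transpose_apply, onesCol,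
      Matrix.of_apply, Fin.sum_univ_one, mul_one, one_mul] at h
    exact h
  have hswap : ∀ (M : Matrix (Fin n) (Fin k₁ ⊕ Fin k₂) ℝ), (∀ c, (∑ i, M i c) = 0) →
      ∀ i, (∑ j : Fin n, ∑ l, M i l * M j l) = 0 := by
    intro M hM i
    rw [Finset.sum_comm]
    apply Finset.sum_eq_zero
    intro l _
    rw [← Finset.mul_sum, hM l, mul_zero]
  have eq2 : ∀ i, (n:ℝ) * α i 0 + (∑ t, α t 0) = (n:ℝ) * α' i 0 + (∑ t, α' t 0) := by
    intro i
    have h := Finset.sum_congr rfl (fun j (_ : j ∈ (Finset.univ : Finset (Fin n))) => eq1 i j)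
    simp only [Finset.sum_add_distrib, Finset.sum_const, Finset.card_univ,
      Fintype.card_fin, nsmul_eq_mul] at h
    rw [hswap _ hcsZ₁₂ i, hswap _ hcsZ₁₂' i, add_zero, add_zero] at h
    exact h
  have hS : (∑ t, α t 0) = ∑ t, α' t 0 := by
    have h := Finset.sum_congr rfl (fun i (_ : i ∈ (Finset.univ : Finset (Fin n))) => eq2 i)
    simp only [Finset.sum_add_distrib, ← Finset.mul_sum, Finset.sum_const, Finset.card_univ,
      Fintype.card_fin, nsmul_eq_mul] at h
    have h2 : (n:ℝ) * ((∑ t, α t 0) - ∑ t, α' t 0) = 0 := by ring_nf; ring_nf at h; linarith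
    rcases mul_eq_zero.mp h2 with h3 | h3
    · exact absurd h3 hn0
    · linarith
  have hα : α = α' := by
    ext i j
    have hj : j = 0 := Subsingleton.elim j 0
    subst hj
    have h := eq2 i
    rw [hS] at h
    exact mul_left_cancel₀ hn0 (add_right_cancel h)
  have hGG : Z₁₂ * Z₁₂ᵀ = Z₁₂' * Z₁₂'ᵀ := by
    have h := hnet
    rw [hα] at h
    exact add_left_cancel h
  -- Step 2: μ = μ'
  have eqm : ∀ i j, μ j 0 + (∑ l, Z₂ i l * Λ₂ j l) + (∑ l, Z₃ i l * Λ₃ j l)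
      = μ' j 0 + (∑ l, Z₂' i l * Λ₂' j l) + (∑ l, Z₃' i l * Λ₃' j l) := by
    intro i j
    have h := Matrix.ext_iff.mpr hmean i j
    simp only [Matrix.add_apply, Matrix.mul_apply, Matrix.transpose_apply, onesCol,
      Matrix.of_apply, Fin.sum_univ_one, mul_one, one_mul] at h
    exact h
  have hzsum : ∀ {k : ℕ} (M : Matrix (Fin n) (Fin k) ℝ) (v : Fin k → ℝ),
      (∀ l, (∑ i, M i l) = 0) → (∑ i : Fin n, ∑ l, M i l * v l) = 0 := by
    intro k M v hM
    rw [Finset.sum_comm]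
    apply Finset.sum_eq_zero
    intro l _
    rw [← Finset.sum_mul, hM l, zero_mul]
  have hμ : μ = μ' := by
    ext j t
    have ht : t = 0 := Subsingleton.elim t 0
    subst ht
    have h := Finset.sum_congr rfl (fun i (_ : i ∈ (Finset.univ : Finset (Fin n))) => eqm i j)
    simp only [Finset.sum_add_distrib, Finset.sum_const, Finset.card_univ,
      Fintype.card_fin, nsmul_eq_mul] at h
    rw [hzsum Z₂ (fun l => Λ₂ j l) hcsZ₂, hzsum Z₃ (fun l => Λ₃ j l) hcsZ₃,
      hzsum Z₂' (fun l => Λ₂' j l) hcsZ₂', hzsum Z₃' (fun l => Λ₃' j l) hcsZ₃',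
      add_zero, add_zero, add_zero, add_zero] at h
    exact mul_left_cancel₀ hn0 h
  have hres : Z₂ * Λ₂ᵀ + Z₃ * Λ₃ᵀ = Z₂' * Λ₂'ᵀ + Z₃' * Λ₃'ᵀ := by
    have h := hmean
    rw [hμ, add_assoc, add_assoc] at h
    exact add_left_cancel h
  -- Step 3: diagonal block facts
  obtain ⟨dW, d₃, hWtW, hdWa, hdWp, hWpos, hZ3tZ3, hd3a, hd3p, hZ3pos, horth123⟩ :=
    IC_facts Z₁₂ Z₃ Zf hZf hIC hsign
  obtain ⟨dW', d₃', hWtW', hdWa', hdWp', hWpos', hZ3tZ3', hd3a', hd3p', hZ3pos', horth123'⟩ :=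
    IC_facts Z₁₂' Z₃' Zf' hZf' hIC' hsign'
  -- Step 4: Z₁₂ = Z₁₂'
  have hWWt : (Z₁₂.submatrix id ⇑finSumFinEquiv.symm) * (Z₁₂.submatrix id ⇑finSumFinEquiv.symm)ᵀ
      = (Z₁₂'.submatrix id ⇑finSumFinEquiv.symm) * (Z₁₂'.submatrix id ⇑finSumFinEquiv.symm)ᵀ := by
    rw [submatrix_mul_transpose_self, submatrix_mul_transpose_self]
    exact hGG
  have hWeq := sign_core _ _ dW dW' hWtW hWtW' hdWa hdWa' hdWp hdWp' hWWt hWpos hWpos'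
  have hZ₁₂eq : Z₁₂ = Z₁₂' := by
    ext i c
    have h := Matrix.ext_iff.mpr hWeq i (finSumFinEquiv c)
    simpa [Matrix.submatrix_apply] using h.symm
  have hZ1 : Z₁ = Z₁' := by
    ext i a
    have h := Matrix.ext_iff.mpr hZ₁₂eq i (Sum.inl a)
    rwa [hZ12l, hZ12l'] at h
  have hZ2 : Z₂ = Z₂' := by
    ext i a
    have h := Matrix.ext_iff.mpr hZ₁₂eq i (Sum.inr a)
    rwa [hZ12r, hZ12r'] at h
  -- Step 5: Λ₂ = Λ₂'
  have hZ₂tZ₂ : Z₂ᵀ * Z₂ = Matrix.diagonal (fun a => dW (finSumFinEquiv (Sum.inr a))) := by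
    ext a b
    have h := Matrix.ext_iff.mpr hWtW (finSumFinEquiv (Sum.inr a)) (finSumFinEquiv (Sum.inr b))
    rw [Matrix.mul_apply] at h
    simp only [Matrix.transpose_apply, Matrix.submatrix_apply, id_eq,
      Equiv.symm_apply_apply] at h
    rw [show (∑ i, Z₁₂ i (Sum.inr a) * Z₁₂ i (Sum.inr b)) = ∑ i, Z₂ i a * Z₂ i b from
      Finset.sum_congr rfl fun i _ => by rw [hZ12r, hZ12r]] at h
    rw [Matrix.mul_apply]
    simp only [Matrix.transpose_apply]
    by_cases hab : a = b
    · subst hab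
      rw [Matrix.diagonal_apply_eq] at h ⊢
      exact h
    · rw [Matrix.diagonal_apply_ne _ (fun hh : finSumFinEquiv (Sum.inr a) = _ =>
        hab (Sum.inr.inj (finSumFinEquiv.injective hh)))] at h
      rw [Matrix.diagonal_apply_ne _ hab]
      exact h
  have hZ₂tZ₃ : Z₂ᵀ * Z₃ = 0 := by
    ext a b
    have h := Matrix.ext_iff.mpr horth123 (Sum.inr a) b
    rw [Matrix.mul_apply] at h ⊢
    simp only [Matrix.transpose_apply, Matrix.zero_apply] at h ⊢
    rw [show (∑ i, Z₂ i a * Z₃ i b) = ∑ i, Z₁₂ i (Sum.inr a) * Z₃ i b from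
      Finset.sum_congr rfl fun i _ => by rw [hZ12r]]
    exact h
  have hZ₂'tZ₃' : Z₂'ᵀ * Z₃' = 0 := by
    ext a b
    have h := Matrix.ext_iff.mpr horth123' (Sum.inr a) b
    rw [Matrix.mul_apply] at h ⊢
    simp only [Matrix.transpose_apply, Matrix.zero_apply] at h ⊢
    rw [show (∑ i, Z₂' i a * Z₃' i b) = ∑ i, Z₁₂' i (Sum.inr a) * Z₃' i b from
      Finset.sum_congr rfl fun i _ => by rw [hZ12r']]
    exact h
  have hΛ₂ : Λ₂ = Λ₂' := by
    have h := congrArg (fun M => Z₂ᵀ * M) hres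
    simp only [Matrix.mul_add] at h
    rw [← Matrix.mul_assoc, ← Matrix.mul_assoc, ← Matrix.mul_assoc, ← Matrix.mul_assoc] at h
    rw [← hZ2] at h
    have hz23' : Z₂ᵀ * Z₃' = 0 := by rw [hZ2]; exact hZ₂'tZ₃'
    rw [hZ₂tZ₃, hz23', Matrix.zero_mul, Matrix.zero_mul, add_zero, add_zero, hZ₂tZ₂] at h
    have h2 := diagonal_mul_cancel _ (fun a => (hdWp _).ne') _ _ h
    exact Matrix.transpose_inj.mp h2
  have hres3 : Z₃ * Λ₃ᵀ = Z₃' * Λ₃'ᵀ := by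
    have h := hres
    rw [← hZ2, ← hΛ₂] at h
    exact add_left_cancel h
  -- Step 6: Z₃ = Z₃' via Λ₃ orthogonality
  have hppos : (0:ℝ) < (p:ℝ) := by exact_mod_cast hp
  have hp2 : ((p:ℝ) * (p:ℝ)) ≠ 0 := (mul_pos hppos hppos).ne'
  have hΨT : Ψᵀ = Ψ := by
    ext i j
    by_cases hij : i = j
    · subst hij; rw [Matrix.transpose_apply]
    · rw [Matrix.transpose_apply, hΨdiag (Ne.symm hij), hΨdiag hij]
  have hΨiT : Ψ⁻¹ᵀ = Ψ⁻¹ := by rw [Matrix.transpose_nonsing_inv, hΨT]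
  have hA1 : (p:ℝ) • Z₃ = Z₃' * (Λ₃'ᵀ * (Ψ⁻¹ * Λ₃)) := by
    calc (p:ℝ) • Z₃ = Z₃ * ((p:ℝ) • (1 : Matrix (Fin k₃) (Fin k₃) ℝ)) := by simp
      _ = Z₃ * (Λ₃ᵀ * Ψ⁻¹ * Λ₃) := by rw [hIC₃]
      _ = (Z₃ * Λ₃ᵀ) * (Ψ⁻¹ * Λ₃) := by simp only [Matrix.mul_assoc]
      _ = (Z₃' * Λ₃'ᵀ) * (Ψ⁻¹ * Λ₃) := by rw [hres3]
      _ = _ := by simp only [Matrix.mul_assoc]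
  have hA2 : (p:ℝ) • Z₃' = Z₃ * (Λ₃ᵀ * (Ψ⁻¹ * Λ₃')) := by
    calc (p:ℝ) • Z₃' = Z₃' * ((p:ℝ) • (1 : Matrix (Fin k₃) (Fin k₃) ℝ)) := by simp
      _ = Z₃' * (Λ₃'ᵀ * Ψ⁻¹ * Λ₃') := by rw [hIC₃']
      _ = (Z₃' * Λ₃'ᵀ) * (Ψ⁻¹ * Λ₃') := by simp only [Matrix.mul_assoc]
      _ = (Z₃ * Λ₃ᵀ) * (Ψ⁻¹ * Λ₃') := by rw [hres3]
      _ = _ := by simp only [Matrix.mul_assoc]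
  have hAT : (Λ₃'ᵀ * (Ψ⁻¹ * Λ₃))ᵀ = Λ₃ᵀ * (Ψ⁻¹ * Λ₃') := by
    rw [Matrix.transpose_mul, Matrix.transpose_mul, Matrix.transpose_transpose, hΨiT,
      Matrix.mul_assoc]
  have hAAt : Λ₃'ᵀ * (Ψ⁻¹ * Λ₃) * (Λ₃'ᵀ * (Ψ⁻¹ * Λ₃))ᵀ
      = ((p:ℝ) * (p:ℝ)) • (1 : Matrix (Fin k₃) (Fin k₃) ℝ) := by
    have h1 : ((p:ℝ)*(p:ℝ)) • Z₃'
        = Z₃' * (Λ₃'ᵀ * (Ψ⁻¹ * Λ₃) * (Λ₃'ᵀ * (Ψ⁻¹ * Λ₃))ᵀ) := by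
      calc ((p:ℝ)*(p:ℝ)) • Z₃' = (p:ℝ) • ((p:ℝ) • Z₃') := by rw [smul_smul]
        _ = (p:ℝ) • (Z₃ * (Λ₃ᵀ * (Ψ⁻¹ * Λ₃'))) := by rw [hA2]
        _ = ((p:ℝ) • Z₃) * (Λ₃ᵀ * (Ψ⁻¹ * Λ₃')) := by rw [Matrix.smul_mul]
        _ = (Z₃' * (Λ₃'ᵀ * (Ψ⁻¹ * Λ₃))) * (Λ₃ᵀ * (Ψ⁻¹ * Λ₃')) := by rw [hA1]
        _ = _ := by rw [← hAT]; simp only [Matrix.mul_assoc]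
    have h2 := congrArg (fun M => Z₃'ᵀ * M) h1
    rw [Matrix.mul_smul, ← Matrix.mul_assoc, ← Matrix.mul_assoc, hZ3tZ3'] at h2
    have h3 : Matrix.diagonal d₃' * (((p:ℝ)*(p:ℝ)) • (1 : Matrix (Fin k₃) (Fin k₃) ℝ))
        = ((p:ℝ)*(p:ℝ)) • Matrix.diagonal d₃' := by
      simp
    exact diagonal_mul_cancel d₃' (fun a => (hd3p' a).ne') _ _
      (by rw [Matrix.mul_assoc] at h2; rw [← h2, h3])
  have hG3 : Z₃ * Z₃ᵀ = Z₃' * Z₃'ᵀ := by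
    have h1 : ((p:ℝ)*(p:ℝ)) • (Z₃ * Z₃ᵀ) = ((p:ℝ)*(p:ℝ)) • (Z₃' * Z₃'ᵀ) := by
      calc ((p:ℝ)*(p:ℝ)) • (Z₃ * Z₃ᵀ) = ((p:ℝ) • Z₃) * ((p:ℝ) • Z₃)ᵀ := by
            rw [Matrix.transpose_smul, Matrix.mul_smul, Matrix.smul_mul, smul_smul]
        _ = (Z₃' * (Λ₃'ᵀ * (Ψ⁻¹ * Λ₃))) * (Z₃' * (Λ₃'ᵀ * (Ψ⁻¹ * Λ₃)))ᵀ := by rw [hA1]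
        _ = Z₃' * (Λ₃'ᵀ * (Ψ⁻¹ * Λ₃) * (Λ₃'ᵀ * (Ψ⁻¹ * Λ₃))ᵀ) * Z₃'ᵀ := by
            rw [Matrix.transpose_mul (Z₃') (Λ₃'ᵀ * (Ψ⁻¹ * Λ₃))]
            simp only [Matrix.mul_assoc]
        _ = Z₃' * (((p:ℝ)*(p:ℝ)) • (1 : Matrix (Fin k₃) (Fin k₃) ℝ)) * Z₃'ᵀ := by rw [hAAt]
        _ = ((p:ℝ)*(p:ℝ)) • (Z₃' * Z₃'ᵀ) := by
            rw [Matrix.mul_smul, Matrix.mul_one, Matrix.smul_mul]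
    ext i i'
    have h2 := Matrix.ext_iff.mpr h1 i i'
    rw [Matrix.smul_apply, Matrix.smul_apply, smul_eq_mul, smul_eq_mul] at h2
    exact mul_left_cancel₀ hp2 h2
  have hZ3 : Z₃ = Z₃' :=
    (sign_core Z₃ Z₃' d₃ d₃' hZ3tZ3 hZ3tZ3' hd3a hd3a' hd3p hd3p' hG3 hZ3pos hZ3pos').symm
  -- Step 7: Λ₃ = Λ₃'
  have hΛ₃ : Λ₃ = Λ₃' := by
    have h := hres3
    rw [← hZ3] at h
    have h2 := congrArg (fun M => Z₃ᵀ * M) h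
    rw [← Matrix.mul_assoc, ← Matrix.mul_assoc, hZ3tZ3] at h2
    have h3 := diagonal_mul_cancel d₃ (fun a => (hd3p a).ne') _ _ h2
    exact Matrix.transpose_inj.mp h3
  exact ⟨hα, hμ, hZ1, hZ2, hZ3, hΛ₂, hΛ₃⟩
end

section
/- Let X ∈ ℝ^{n×d}, and set μ_x = Xᵀ 1_n / n, Z = (I − P_1) X, and α = Z μ_x + (‖μ_x‖² / 2) 1_n, where P_1 = 1_n 1_nᵀ / n. Then 1_nᵀ Z = 0 and X Xᵀ = α 1_nᵀ + 1_n αᵀ + Z Zᵀ. Consequently, every positive semidefinite matrix P ∈ ℝ^{n×n} of rank at most d (in particular, the probability matrix of any random dot product graph with d-dimensional latent positions) can be written in the form P = α 1_nᵀ + 1_n αᵀ + Z Zᵀ with α ∈ ℝ^n and a centered matrix Z ∈ ℝ^{n×d}. -/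
open Matrix

lemma onesCol_tr_mul (n : ℕ) : (onesCol n)ᵀ * onesCol n = (n : ℝ) • 1 := by
  ext i j
  fin_cases i; fin_cases j
  simp [onesCol, mul_apply]

lemma aux_decomp (n d : ℕ) (hn : 1 ≤ n)
    (X : Matrix (Fin n) (Fin d) ℝ)
    (μx : Matrix (Fin d) (Fin 1) ℝ)
    (Z : Matrix (Fin n) (Fin d) ℝ)
    (α : Matrix (Fin n) (Fin 1) ℝ)
    (hμ : μx = (n : ℝ)⁻¹ • (Xᵀ * onesCol n))
    (hZ : Z = (1 - (n : ℝ)⁻¹ • (onesCol n * (onesCol n)ᵀ)) * X)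
    (hα : α = Z * μx + ((∑ i, (μx i 0) ^ 2) / 2) • onesCol n) :
    (onesCol n)ᵀ * Z = 0
      ∧ X * Xᵀ = α * (onesCol n)ᵀ + onesCol n * αᵀ + Z * Zᵀ := by
  have hn0 : (n : ℝ) ≠ 0 := by positivity
  set J := onesCol n with hJ
  have hJJ : Jᵀ * J = (n : ℝ) • 1 := onesCol_tr_mul n
  have h1 : Jᵀ * Z = 0 := by
    rw [hZ, ← Matrix.mul_assoc, Matrix.mul_sub, Matrix.mul_one, Matrix.mul_smul,
      ← Matrix.mul_assoc, hJJ, Matrix.smul_mul, Matrix.one_mul, smul_smul,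
      inv_mul_cancel₀ hn0, one_smul, sub_self, Matrix.zero_mul]
  have hμt : μxᵀ = (n : ℝ)⁻¹ • (Jᵀ * X) := by
    rw [hμ, transpose_smul, transpose_mul, transpose_transpose]
  have hX : X = Z + J * μxᵀ := by
    rw [hμt, hZ, Matrix.sub_mul, Matrix.one_mul, Matrix.smul_mul, Matrix.mul_smul,
      Matrix.mul_assoc]
    abel
  set c : ℝ := (∑ i, (μx i 0) ^ 2) with hc
  have hμμ : μxᵀ * μx = c • (1 : Matrix (Fin 1) (Fin 1) ℝ) := by
    ext i j
    fin_cases i; fin_cases j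
    simp [mul_apply, pow_two, hc]
  have hmid : J * μxᵀ * (μx * Jᵀ) = (c / 2) • (J * Jᵀ) + (c / 2) • (J * Jᵀ) := by
    rw [← add_smul, ← add_div, add_self_div_two, Matrix.mul_assoc,
      ← Matrix.mul_assoc μxᵀ, hμμ, Matrix.smul_mul, Matrix.one_mul, Matrix.mul_smul]
  have hαt : αᵀ = μxᵀ * Zᵀ + (c / 2) • Jᵀ := by
    rw [hα, transpose_add, transpose_mul, transpose_smul]
  refine ⟨h1, ?_⟩
  conv_lhs => rw [hX]
  rw [hαt, hα]
  simp only [transpose_add, transpose_mul, transpose_transpose, transpose_smul,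
    Matrix.add_mul, Matrix.mul_add, Matrix.smul_mul, Matrix.mul_smul, Matrix.mul_assoc]
  rw [← Matrix.mul_assoc J μxᵀ (μx * Jᵀ), ← Matrix.mul_assoc J μxᵀ Zᵀ] at *
  rw [hmid]
  abel


lemma psd_factor (n d : ℕ) (P : Matrix (Fin n) (Fin n) ℝ)
    (hP : P.PosSemidef) (hrk : P.rank ≤ d) :
    ∃ Y : Matrix (Fin n) (Fin d) ℝ, P = Y * Yᵀ := by
  have hH : P.IsHermitian := hP.1
  set U : Matrix (Fin n) (Fin n) ℝ := (hH.eigenvectorUnitary : Matrix (Fin n) (Fin n) ℝ) with hU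
  set lam := hH.eigenvalues with hlam
  have hspec : P = U * diagonal (RCLike.ofReal ∘ lam) * (star U) := hH.spectral_theorem
  have hstar : star U = Uᵀ := by
    ext i j
    simp [Matrix.star_apply]
  set s : Fin n → ℝ := fun i => Real.sqrt (lam i) with hs
  have hsq : diagonal (RCLike.ofReal ∘ lam) = diagonal s * diagonal s := by
    rw [diagonal_mul_diagonal]
    have hfun : (RCLike.ofReal ∘ lam : Fin n → ℝ) = fun i => s i * s i := by
      funext i
      simp [hs, Pi.mul_apply, Real.mul_self_sqrt (hP.eigenvalues_nonneg i)]
      exact (Real.mul_self_sqrt (hP.eigenvalues_nonneg i)).symm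
    rw [hfun]
  classical
  have hcard : Fintype.card {i // lam i ≠ 0} ≤ Fintype.card (Fin d) := by
    rw [Fintype.card_fin]
    exact hH.rank_eq_card_non_zero_eigs ▸ hrk
  obtain ⟨e⟩ := Function.Embedding.nonempty_of_card_le hcard
  set E : Matrix (Fin n) (Fin d) ℝ :=
    Matrix.of (fun i j => if h : lam i ≠ 0 then (if e ⟨i, h⟩ = j then (1:ℝ) else 0) else 0) with hE
  have hEEt : E * Eᵀ = diagonal (fun i => if lam i ≠ 0 then (1:ℝ) else 0) := by
    ext i k
    by_cases hi : lam i ≠ 0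
    · by_cases hk : lam k ≠ 0
      · simp only [mul_apply, transpose_apply, hE, of_apply, dif_pos hi, dif_pos hk]
        by_cases hik : i = k
        · subst hik
          simp [diagonal_apply_eq, hi, Finset.sum_ite_eq']
        · have hne : e ⟨i, hi⟩ ≠ e ⟨k, hk⟩ := by
            intro hcontra
            exact hik (congrArg Subtype.val (e.injective hcontra))
          rw [diagonal_apply_ne _ hik]
          rw [Finset.sum_eq_zero]
          intro j _
          by_cases h1 : e ⟨i, hi⟩ = j
          · subst h1
            simp [Ne.symm hne]
          · simp [h1]
      · simp only [mul_apply, transpose_apply, hE, of_apply, dif_neg hk, mul_zero,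
          Finset.sum_const_zero]
        rw [diagonal_apply_ne]
        intro hik; exact hk (hik ▸ hi)
    · push_neg at hi
      simp only [mul_apply, transpose_apply, hE, of_apply, hi, ne_eq, not_true_eq_false,
        dif_neg, not_false_eq_true, zero_mul, Finset.sum_const_zero]
      by_cases hik : i = k
      · subst hik; simp [hi]
      · rw [diagonal_apply_ne _ hik]
  have hdsE : diagonal s * (E * Eᵀ) = diagonal s := by
    rw [hEEt, diagonal_mul_diagonal]
    have hmul : (fun i => s i * if lam i ≠ 0 then (1:ℝ) else 0) = s := by
      funext i
      by_cases hi : lam i = 0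
      · simp [Pi.mul_apply, hi, hs]
      · simp [Pi.mul_apply, hi]
    rw [hmul]
  refine ⟨U * diagonal s * E, ?_⟩
  rw [transpose_mul, transpose_mul, diagonal_transpose, ← hstar]
  calc P = U * (diagonal s * diagonal s * star U) := by
          rw [hspec, hsq]; simp only [Matrix.mul_assoc]
    _ = U * (diagonal s * (E * Eᵀ) * (diagonal s * star U)) := by
          rw [hdsE]; simp only [Matrix.mul_assoc]
    _ = U * diagonal s * E * (Eᵀ * (diagonal s * star U)) := by
          simp only [Matrix.mul_assoc]

/-- Any `X` gives rise to a centered `Z = (I − P₁) X` and `α = Z μₓ + (‖μₓ‖²/2) 1ₙ`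
with `X Xᵀ = α 1ᵀ + 1 αᵀ + Z Zᵀ`; consequently every positive semidefinite `P` of rank
at most `d` (in particular, an RDPG probability matrix) admits the representation
`P = α 1ᵀ + 1 αᵀ + Z Zᵀ` with `Z` centered. -/
theorem rdpg_equivalence
    (n d : ℕ) (hn : 1 ≤ n)
    (X : Matrix (Fin n) (Fin d) ℝ)
    (μx : Matrix (Fin d) (Fin 1) ℝ)
    (Z : Matrix (Fin n) (Fin d) ℝ)
    (α : Matrix (Fin n) (Fin 1) ℝ)
    (hμ : μx = (n : ℝ)⁻¹ • (Xᵀ * onesCol n))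
    (hZ : Z = (1 - (n : ℝ)⁻¹ • (onesCol n * (onesCol n)ᵀ)) * X)
    (hα : α = Z * μx + ((∑ i, (μx i 0) ^ 2) / 2) • onesCol n) :
    ((onesCol n)ᵀ * Z = 0
      ∧ X * Xᵀ = α * (onesCol n)ᵀ + onesCol n * αᵀ + Z * Zᵀ)
    ∧ ∀ P : Matrix (Fin n) (Fin n) ℝ, P.PosSemidef → P.rank ≤ d →
        ∃ (β : Matrix (Fin n) (Fin 1) ℝ) (W : Matrix (Fin n) (Fin d) ℝ),
          (onesCol n)ᵀ * W = 0
            ∧ P = β * (onesCol n)ᵀ + onesCol n * βᵀ + W * Wᵀ := by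
  refine ⟨aux_decomp n d hn X μx Z α hμ hZ hα, ?_⟩
  intro P hP hrk
  obtain ⟨Y, hY⟩ := psd_factor n d P hP hrk
  obtain ⟨h1, h2⟩ := aux_decomp n d hn Y _ _ _ rfl rfl rfl
  exact ⟨_, _, h1, by rw [hY, h2]⟩
end
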